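/- arXiv:0712.0066 — 7 statements merged into one kernel-verified Lean document; each statement's English description precedes it below -/
import Mathlib

section
/- In the Borel subalgebra U(B₀), for sequences α of length n and β of length p, [h_ℓ(α), x_m^-(β)] = -2 x_{ℓ+m}^-(αβ) holds for all ℓ ≥ n and m > p, and [h_ℓ(α), x_m^+(β)] = 2 x_{ℓ+m}^+(αβ) for all ℓ ≥ n, m ≥ p. -/
/-
The parametrized generators are images of the sequences `x_k^±`, `h_k` under the operator
`∏ i, (1 - α_i S)`, where `S` shifts a sequence by one index. These operators multiply
polynomially, so twisting first by `β` and then by `α` is twisting by the concatenation `αβ`.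
Since `[h_a, x_b^±] = ±2 x_{a+b}^±` only depends on `a + b`, and the bounds `ℓ ≥ n`, `m > p`
(resp. `m ≥ p`) keep all indices in range, the bracket `[h_ℓ(α), x_m^±(β)]` is `±2` times
the `α`-twist of `x^±(β)` at `ℓ + m`, i.e. `±2 x_{ℓ+m}^±(αβ)`.
-/

open scoped BigOperators

/-- A representation of the Borel subalgebra `U(B₀)` of the `sl₂` loop algebra:
operators `x_k^+, h_k` (`k ≥ 0`) and `x_k^-` (`k ≥ 1`, the value of `xm` at `0`
being irrelevant) on a complex vector space, satisfying the loop relations. -/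
structure BorelRep (V : Type*) [AddCommGroup V] [Module ℂ V] where
  xp : ℕ → Module.End ℂ V
  xm : ℕ → Module.End ℂ V
  h : ℕ → Module.End ℂ V
  h_xp : ∀ j k, ⁅h j, xp k⁆ = 2 • xp (j + k)
  h_xm : ∀ j k, 1 ≤ k → ⁅h j, xm k⁆ = -(2 • xm (j + k))
  xp_xm : ∀ j k, 1 ≤ k → ⁅xp j, xm k⁆ = h (j + k)
  h_h : ∀ j k, ⁅h j, h k⁆ = 0
  xp_xp : ∀ j k, ⁅xp j, xp k⁆ = 0
  xm_xm : ∀ j k, 1 ≤ j → 1 ≤ k → ⁅xm j, xm k⁆ = 0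

/-- The `k`-th elementary symmetric polynomial of `α_1, …, α_n`. -/
noncomputable def esymm {n : ℕ} (α : Fin n → ℂ) (k : ℕ) : ℂ :=
  ∑ s ∈ Finset.powersetCard k (Finset.univ : Finset (Fin n)), ∏ i ∈ s, α i

variable {V : Type*} [AddCommGroup V] [Module ℂ V]

/-- `x_m^+(α) = Σ_{k=0}^n (-1)^k e_k(α) x_{m-k}^+`. -/
noncomputable def xpP (B : BorelRep V) {n : ℕ} (α : Fin n → ℂ) (m : ℕ) :
    Module.End ℂ V :=
  ∑ k ∈ Finset.range (n + 1), ((-1 : ℂ) ^ k * esymm α k) • B.xp (m - k)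

/-- `x_m^-(α) = Σ_{k=0}^n (-1)^k e_k(α) x_{m-k}^-`. -/
noncomputable def xmP (B : BorelRep V) {n : ℕ} (α : Fin n → ℂ) (m : ℕ) :
    Module.End ℂ V :=
  ∑ k ∈ Finset.range (n + 1), ((-1 : ℂ) ^ k * esymm α k) • B.xm (m - k)

/-- `h_m(α) = Σ_{k=0}^n (-1)^k e_k(α) h_{m-k}`. -/
noncomputable def hP (B : BorelRep V) {n : ℕ} (α : Fin n → ℂ) (m : ℕ) :
    Module.End ℂ V :=
  ∑ k ∈ Finset.range (n + 1), ((-1 : ℂ) ^ k * esymm α k) • B.h (m - k)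

/-- The cyclic submodule `U(B₀)Ψ`: the span of all vectors obtained from `Ψ`
by words in the generators. -/
def cyclic (B : BorelRep V) (Ψ : V) : Submodule ℂ V :=
  Submodule.span ℂ {v | ∃ w : List (Module.End ℂ V),
    (∀ f ∈ w, (∃ k, f = B.xp k) ∨ (∃ k, 1 ≤ k ∧ f = B.xm k) ∨ (∃ k, f = B.h k)) ∧
    v = w.prod Ψ}


open Polynomial

theorem Finset.prod_one_sub_C_mul_X_eq_sum {R ι : Type*} [CommRing R] (s : Finset ι)
    (f : ι → R) :
    ∏ i ∈ s, (1 - C (f i) * X) =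
      ∑ k ∈ Finset.range (s.card + 1),
        C ((-1) ^ k * ∑ t ∈ s.powersetCard k, ∏ i ∈ t, f i) * X ^ k := by
  simp_rw [sub_eq_add_neg, Finset.prod_one_add, Finset.sum_powerset, Finset.mul_sum, map_sum,
    Finset.sum_mul]
  refine Finset.sum_congr rfl fun k _ => Finset.sum_congr rfl fun t ht => ?_
  rw [Finset.prod_neg, Finset.prod_mul_distrib, Finset.prod_const,
    (Finset.mem_powersetCard.1 ht).2, ← map_prod]
  simp only [map_mul, map_pow, map_neg, map_one]
  ring

lemma prod_one_sub_C_mul_X_eq_sum_esymm {n : ℕ} (α : Fin n → ℂ) :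
    ∏ i, (1 - C (α i) * X) =
      ∑ k ∈ Finset.range (n + 1), C ((-1) ^ k * esymm α k) * X ^ k := by
  have h := Finset.univ.prod_one_sub_C_mul_X_eq_sum α
  rwa [Finset.card_univ, Fintype.card_fin] at h

lemma prod_one_sub_C_mul_X_append {R : Type*} [CommRing R] {n p : ℕ} (α : Fin n → R)
    (β : Fin p → R) :
    ∏ i, (1 - C (Fin.append α β i) * X) =
      (∏ i, (1 - C (α i) * X)) * ∏ i, (1 - C (β i) * X) := by
  simp [Fin.prod_univ_add]

section Twist

variable {M : Type*} [AddCommGroup M] [Module ℂ M]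

/-- `xpP B α`, `xmP B α` and `hP B α` are `twist α` applied to `B.xp`, `B.xm` and `B.h`. -/
noncomputable def twist {n : ℕ} (α : Fin n → ℂ) (f : ℕ → M) (m : ℕ) : M :=
  ∑ k ∈ Finset.range (n + 1), ((-1 : ℂ) ^ k * esymm α k) • f (m - k)

noncomputable abbrev seqShift : Module.End ℂ (ℕ → M) := LinearMap.funLeft ℂ M (· - 1)

lemma seqShift_pow_apply (k : ℕ) (f : ℕ → M) (m : ℕ) :
    ((seqShift ^ k : Module.End ℂ (ℕ → M)) f) m = f (m - k) := by
  induction k generalizing m with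
  | zero => simp
  | succ k ih =>
    rw [pow_succ', Module.End.mul_apply, LinearMap.funLeft_apply, ih, Nat.sub_sub, add_comm]

/-- `twist α` is `∏ i, (1 - α i • S)` for the shift `S`; in `ℕ` the truncated subtraction
satisfies `m - j - k = m - (j + k)`, so no boundary terms appear. -/
lemma twist_eq_aeval {n : ℕ} (α : Fin n → ℂ) (f : ℕ → M) :
    twist α f = aeval (seqShift : Module.End ℂ (ℕ → M)) (∏ i, (1 - C (α i) * X)) f := by
  ext m
  simp only [prod_one_sub_C_mul_X_eq_sum_esymm, map_sum, C_mul_X_pow_eq_monomial, aeval_monomial,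
    LinearMap.sum_apply, Finset.sum_apply, Module.End.mul_apply, Module.algebraMap_end_apply,
    Pi.smul_apply, seqShift_pow_apply, twist]

lemma twist_twist {n p : ℕ} (α : Fin n → ℂ) (β : Fin p → ℂ) (f : ℕ → M) :
    twist α (twist β f) = twist (Fin.append α β) f := by
  rw [twist_eq_aeval, twist_eq_aeval, twist_eq_aeval, prod_one_sub_C_mul_X_append, map_mul,
    Module.End.mul_apply]

lemma twist_nsmul {n : ℕ} (α : Fin n → ℂ) (c : ℕ) (f : ℕ → M) (m : ℕ) :
    twist α (c • f) m = c • twist α f m := by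
  simp only [twist, Pi.smul_apply, Finset.smul_sum, smul_comm c]

lemma twist_neg {n : ℕ} (α : Fin n → ℂ) (f : ℕ → M) (m : ℕ) :
    twist α (-f) m = -twist α f m := by
  simp only [twist, Pi.neg_apply, smul_neg, Finset.sum_neg_distrib]

variable {L : Type*} [LieRing L] [LieAlgebra ℂ L] in
lemma twist_lie_of_lie_eq {n : ℕ} (α : Fin n → ℂ) {f g : ℕ → L} {y : L} {ℓ m : ℕ}
    (hℓ : n ≤ ℓ) (hfg : ∀ a, ⁅f a, y⁆ = g (a + m)) :
    ⁅twist α f ℓ, y⁆ = twist α g (ℓ + m) := by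
  rw [twist, sum_lie]
  refine Finset.sum_congr rfl fun k hk => ?_
  have hkℓ : k ≤ ℓ := (Nat.lt_succ_iff.1 (Finset.mem_range.1 hk)).trans hℓ
  rw [smul_lie, hfg, Nat.sub_add_comm hkℓ]

end Twist

namespace BorelRep

section

-- The bracket of `Module.End ℂ V` in `BorelRep` is the ring commutator.
attribute [local instance] LieRing.ofAssociativeRing

variable (B : BorelRep V) {n p : ℕ} (α : Fin n → ℂ) (β : Fin p → ℂ)

lemma lie_h_xpP {a m : ℕ} (hm : p ≤ m) : ⁅B.h a, xpP B β m⁆ = 2 • xpP B β (a + m) := by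
  rw [xpP, xpP, lie_sum, Finset.smul_sum]
  refine Finset.sum_congr rfl fun k hk => ?_
  have hkm : k ≤ m := (Nat.lt_succ_iff.1 (Finset.mem_range.1 hk)).trans hm
  rw [lie_smul, B.h_xp, smul_comm, Nat.add_sub_assoc hkm]

lemma lie_h_xmP {a m : ℕ} (hm : p < m) : ⁅B.h a, xmP B β m⁆ = -(2 • xmP B β (a + m)) := by
  rw [xmP, xmP, lie_sum, Finset.smul_sum, ← Finset.sum_neg_distrib]
  refine Finset.sum_congr rfl fun k hk => ?_
  have hkm : k < m := (Nat.lt_succ_iff.1 (Finset.mem_range.1 hk)).trans_lt hm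
  rw [lie_smul, B.h_xm _ _ (by omega), smul_neg, smul_comm, Nat.add_sub_assoc hkm.le]

lemma lie_hP_xmP {ℓ m : ℕ} (hℓ : n ≤ ℓ) (hm : p < m) :
    ⁅hP B α ℓ, xmP B β m⁆ = -(2 • xmP B (Fin.append α β) (ℓ + m)) :=
  calc ⁅hP B α ℓ, xmP B β m⁆ = twist α (-(2 • xmP B β)) (ℓ + m) :=
        twist_lie_of_lie_eq α hℓ fun _ => B.lie_h_xmP β hm
    _ = -(2 • twist α (twist β B.xm) (ℓ + m)) := by rw [twist_neg, twist_nsmul]; rfl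
    _ = -(2 • xmP B (Fin.append α β) (ℓ + m)) := by rw [twist_twist]; rfl

lemma lie_hP_xpP {ℓ m : ℕ} (hℓ : n ≤ ℓ) (hm : p ≤ m) :
    ⁅hP B α ℓ, xpP B β m⁆ = 2 • xpP B (Fin.append α β) (ℓ + m) :=
  calc ⁅hP B α ℓ, xpP B β m⁆ = twist α (2 • xpP B β) (ℓ + m) :=
        twist_lie_of_lie_eq α hℓ fun _ => B.lie_h_xpP β hm
    _ = 2 • twist α (twist β B.xp) (ℓ + m) := by rw [twist_nsmul]; rfl
    _ = 2 • xpP B (Fin.append α β) (ℓ + m) := by rw [twist_twist]; rfl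

end

end BorelRep

/-- In `U(B₀)`: `[h_ℓ(α), x_m^-(β)] = -2 x_{ℓ+m}^-(αβ)` for `ℓ ≥ n`, `m > p`,
and `[h_ℓ(α), x_m^+(β)] = 2 x_{ℓ+m}^+(αβ)` for `ℓ ≥ n`, `m ≥ p`. -/
theorem stmt4 (B : BorelRep V) {n p : ℕ} (α : Fin n → ℂ) (β : Fin p → ℂ) :
    (∀ ℓ m : ℕ, n ≤ ℓ → p < m →
      ⁅hP B α ℓ, xmP B β m⁆ = -(2 • xmP B (Fin.append α β) (ℓ + m))) ∧
    (∀ ℓ m : ℕ, n ≤ ℓ → p ≤ m →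
      ⁅hP B α ℓ, xpP B β m⁆ = 2 • xpP B (Fin.append α β) (ℓ + m)) :=
  ⟨fun _ _ hℓ hm => B.lie_hP_xmP α β hℓ hm, fun _ _ hℓ hm => B.lie_hP_xpP α β hℓ hm⟩
end

section
/- Let Ψ be a highest weight vector of U(B₀) such that x_1^- is nilpotent of degree r in U(B₀)Ψ, i.e. (x_1^-)^{r+1}Ψ = 0 and (x_1^-)^r Ψ ≠ 0. Then for every 0 ≤ n ≤ r and every set of positive integers k_1,...,k_n, there exists a complex scalar A_{k_1,...,k_n} such that (x_1^-)^{r-n} x_{k_1}^- ··· x_{k_n}^- Ψ = A_{k_1,...,k_n} (x_1^-)^r Ψ. -/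
open scoped BigOperators

variable {V : Type*} [AddCommGroup V] [Module ℂ V]

/-!
Call `x_k^-` with `k ≥ 2` a heavy letter. By induction on `n`, every word of length `r` in the
`x_k^-` (`k ≥ 1`) with at most `n` heavy letters maps `Ψ` into `ℂ (x_1^-)^r Ψ`. For the step take
`T x_t^- (x_1^-)^s Ψ` with `t ≥ 2` and `n` heavy letters in `T`. By induction
`T (x_1^-)^{s+1} Ψ` is a multiple of `(x_1^-)^r Ψ`, so `T (x_1^-)^{s+2} Ψ = 0`. Applying
`x_{t-2}^+` and moving it to `Ψ` with `[x_j^+, x_k^-] = h_{j+k}` and `[h_j, x_k^-] = -2 x_{j+k}^-`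
turns this into `-(s+2)(s+1) T x_t^- (x_1^-)^s Ψ` plus words of length `r` with at most `n` heavy
letters, to which the induction hypothesis applies again.
-/

def heavyCount (L : List ℕ) : ℕ := L.countP (2 ≤ ·)

@[simp] theorem heavyCount_nil : heavyCount [] = 0 := rfl

@[simp] theorem heavyCount_cons (a : ℕ) (L : List ℕ) :
    heavyCount (a :: L) = heavyCount L + if 2 ≤ a then 1 else 0 := by
  simp [heavyCount, List.countP_cons]

@[simp] theorem heavyCount_append (L L' : List ℕ) :
    heavyCount (L ++ L') = heavyCount L + heavyCount L' :=
  List.countP_append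

@[simp] theorem heavyCount_replicate_one (m : ℕ) : heavyCount (List.replicate m 1) = 0 := by
  simp [heavyCount]

theorem heavyCount_le_length (L : List ℕ) : heavyCount L ≤ L.length :=
  List.countP_le_length

theorem one_le_of_mem_append_replicate {T : List ℕ} (hT : ∀ a ∈ T, 1 ≤ a) (m : ℕ) :
    ∀ a ∈ T ++ List.replicate m 1, 1 ≤ a := fun a ha =>
  (List.mem_append.1 ha).elim (hT a) fun h => (List.eq_of_mem_replicate h).ge

theorem exists_perm_append_replicate_one {L : List ℕ} (hL : ∀ a ∈ L, 1 ≤ a) :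
    ∃ H : List ℕ, (∀ a ∈ H, 2 ≤ a) ∧ H.length = heavyCount L ∧
      L.Perm (H ++ List.replicate (L.length - heavyCount L) 1) := by
  refine ⟨L.filter (2 ≤ ·), by simp, List.countP_eq_length_filter.symm, ?_⟩
  refine (List.filter_append_perm (2 ≤ ·) L).symm.trans (List.Perm.append_left _ ?_)
  refine List.Perm.of_eq ?_
  rw [List.eq_replicate_iff]
  refine ⟨?_, fun a ha => ?_⟩
  · have := List.length_eq_length_filter_add (l := L) (2 ≤ ·)
    rw [heavyCount, List.countP_eq_length_filter]
    omega
  · have h2 : ¬2 ≤ a := by simpa using List.of_mem_filter ha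
    have := hL a (List.mem_of_mem_filter ha)
    omega

namespace BorelRep

variable (B : BorelRep V)

theorem xm_xm_apply_comm {j k : ℕ} (hj : 1 ≤ j) (hk : 1 ≤ k) (u : V) :
    B.xm j (B.xm k u) = B.xm k (B.xm j u) := by
  have := LinearMap.congr_fun (B.xm_xm j k hj hk) u
  rwa [Ring.lie_def, LinearMap.sub_apply, LinearMap.zero_apply, sub_eq_zero] at this

theorem h_xm_apply (j : ℕ) {k : ℕ} (hk : 1 ≤ k) (u : V) :
    B.h j (B.xm k u) = B.xm k (B.h j u) - 2 • B.xm (j + k) u := by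
  have := LinearMap.congr_fun (B.h_xm j k hk) u
  rw [Ring.lie_def, LinearMap.sub_apply, sub_eq_iff_eq_add] at this
  simp only [Module.End.mul_apply, LinearMap.neg_apply, LinearMap.smul_apply] at this
  rw [this]
  abel

theorem xp_xm_apply (j : ℕ) {k : ℕ} (hk : 1 ≤ k) (u : V) :
    B.xp j (B.xm k u) = B.xm k (B.xp j u) + B.h (j + k) u := by
  have := LinearMap.congr_fun (B.xp_xm j k hk) u
  rw [Ring.lie_def, LinearMap.sub_apply, sub_eq_iff_eq_add] at this
  simp only [Module.End.mul_apply] at this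
  rw [this, add_comm]

def lowerWord (L : List ℕ) (v : V) : V := (L.map B.xm).prod v

@[simp] theorem lowerWord_cons (a : ℕ) (L : List ℕ) (v : V) :
    B.lowerWord (a :: L) v = B.xm a (B.lowerWord L v) := rfl

theorem lowerWord_append (L L' : List ℕ) (v : V) :
    B.lowerWord (L ++ L') v = B.lowerWord L (B.lowerWord L' v) := by
  simp [lowerWord, Module.End.mul_apply]

theorem lowerWord_replicate_one (m : ℕ) (v : V) :
    B.lowerWord (List.replicate m 1) v = (B.xm 1 ^ m) v := by
  simp [lowerWord]

theorem xm_one_pow_succ_apply (s : ℕ) (v : V) :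
    (B.xm 1 ^ (s + 1)) v = B.xm 1 ((B.xm 1 ^ s) v) := by
  rw [pow_succ', Module.End.mul_apply]

theorem lowerWord_perm {L L' : List ℕ} (hp : L.Perm L') (hL : ∀ a ∈ L, 1 ≤ a) (v : V) :
    B.lowerWord L v = B.lowerWord L' v := by
  refine LinearMap.congr_fun ((hp.map B.xm).prod_eq' ?_) v
  refine List.pairwise_map.2 (List.pairwise_of_forall_mem_list fun a ha b hb => ?_)
  exact LinearMap.ext (B.xm_xm_apply_comm (hL a ha) (hL b hb))

section Words

variable (Ψ : V)

def wordSpan (m c : ℕ) : Submodule ℂ V :=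
  Submodule.span ℂ {v | ∃ L : List ℕ, L.length = m ∧ (∀ a ∈ L, 1 ≤ a) ∧ heavyCount L ≤ c ∧
    B.lowerWord L Ψ = v}

variable {B Ψ}

theorem lowerWord_mem_wordSpan {L : List ℕ} {m c : ℕ} (hm : L.length = m)
    (hL : ∀ a ∈ L, 1 ≤ a) (hc : heavyCount L ≤ c) : B.lowerWord L Ψ ∈ B.wordSpan Ψ m c :=
  Submodule.subset_span ⟨L, hm, hL, hc, rfl⟩

theorem wordSpan_mono {m c c' : ℕ} (h : c ≤ c') : B.wordSpan Ψ m c ≤ B.wordSpan Ψ m c' :=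
  Submodule.span_mono fun _ ⟨L, hm, hL, hc, hv⟩ => ⟨L, hm, hL, hc.trans h, hv⟩

theorem xm_mem_wordSpan {m c c' k : ℕ} (hk : 1 ≤ k) (hc : c + heavyCount [k] ≤ c') {v : V}
    (hv : v ∈ B.wordSpan Ψ m c) : B.xm k v ∈ B.wordSpan Ψ (m + 1) c' := by
  suffices (B.wordSpan Ψ m c).map (B.xm k) ≤ B.wordSpan Ψ (m + 1) c' from
    this (Submodule.mem_map_of_mem hv)
  rw [wordSpan, Submodule.map_span, Submodule.span_le]
  rintro _ ⟨_, ⟨L, hm, hL, hcL, rfl⟩, rfl⟩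
  refine lowerWord_mem_wordSpan (L := k :: L) (by simp [hm]) ?_ ?_
  · simpa [hk] using hL
  · simp only [heavyCount_cons] at hc ⊢
    omega

theorem h_lowerWord_mem_wordSpan {d : ℕ → ℂ} (hΨ : ∀ k, B.h k Ψ = d k • Ψ) (j : ℕ)
    {L : List ℕ} (hL : ∀ a ∈ L, 1 ≤ a) :
    B.h j (B.lowerWord L Ψ) ∈ B.wordSpan Ψ L.length (heavyCount L + 1) := by
  induction L with
  | nil => exact hΨ j ▸ Submodule.smul_mem _ _ (lowerWord_mem_wordSpan rfl (by simp) (by simp))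
  | cons a L ih =>
    have ha : 1 ≤ a := hL a List.mem_cons_self
    have hL' : ∀ b ∈ L, 1 ≤ b := fun b hb => hL b (List.mem_cons_of_mem a hb)
    have hw := lowerWord_mem_wordSpan (B := B) (Ψ := Ψ) rfl hL' le_rfl
    rw [lowerWord_cons, h_xm_apply B j ha]
    refine Submodule.sub_mem _ (xm_mem_wordSpan ha ?_ (ih hL'))
      (nsmul_mem (xm_mem_wordSpan (k := j + a) (by omega) ?_ hw) 2) <;>
    · simp only [heavyCount_cons, heavyCount_nil]
      split_ifs <;> omega

end Words

section HighestWeight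

variable {B} {Ψ : V} {d : ℕ → ℂ} {r : ℕ}

theorem h_xm_one_pow_apply (hΨ : ∀ k, B.h k Ψ = d k • Ψ) (j s : ℕ) :
    B.h j ((B.xm 1 ^ (s + 1)) Ψ) =
      d j • (B.xm 1 ^ (s + 1)) Ψ - (2 * (s + 1) : ℂ) • B.xm (j + 1) ((B.xm 1 ^ s) Ψ) := by
  induction s with
  | zero =>
    rw [zero_add, pow_one, pow_zero, Module.End.one_apply, h_xm_apply B j le_rfl, hΨ, map_smul]
    module
  | succ s ih =>
    rw [xm_one_pow_succ_apply B (s + 1), h_xm_apply B j le_rfl, ih, map_sub, map_smul, map_smul,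
      B.xm_xm_apply_comm le_rfl (by omega), ← xm_one_pow_succ_apply, ← xm_one_pow_succ_apply]
    module

theorem xp_xm_one_pow_apply (hxp : ∀ k, B.xp k Ψ = 0) (hΨ : ∀ k, B.h k Ψ = d k • Ψ)
    (j s : ℕ) :
    B.xp j ((B.xm 1 ^ (s + 2)) Ψ) = ((s + 2) * d (j + 1) : ℂ) • (B.xm 1 ^ (s + 1)) Ψ
      - ((s + 2) * (s + 1) : ℂ) • B.xm (j + 2) ((B.xm 1 ^ s) Ψ) := by
  induction s with
  | zero =>
    rw [xm_one_pow_succ_apply B 1, xp_xm_apply B j le_rfl, pow_one, xp_xm_apply B j le_rfl,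
      hxp, map_zero, zero_add, hΨ, map_smul, h_xm_apply B _ le_rfl, hΨ, map_smul, pow_zero,
      Module.End.one_apply]
    module
  | succ s ih =>
    rw [xm_one_pow_succ_apply B (s + 2), xp_xm_apply B j le_rfl, ih, h_xm_one_pow_apply hΨ,
      map_sub, map_smul, map_smul, B.xm_xm_apply_comm le_rfl (by omega),
      ← xm_one_pow_succ_apply, ← xm_one_pow_succ_apply]
    module

theorem xp_lowerWord_add_mem_wordSpan (hxp : ∀ k, B.xp k Ψ = 0)
    (hΨ : ∀ k, B.h k Ψ = d k • Ψ) (j s : ℕ) {P : List ℕ} (hP : ∀ a ∈ P, 1 ≤ a) :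
    B.xp j (B.lowerWord (P ++ List.replicate (s + 2) 1) Ψ)
      + ((s + 2) * (s + 1) : ℂ) • B.lowerWord (P ++ (j + 2) :: List.replicate s 1) Ψ
      ∈ B.wordSpan Ψ (P.length + s + 1) P.length := by
  induction P with
  | nil =>
    simp only [List.nil_append, lowerWord_cons, lowerWord_replicate_one,
      xp_xm_one_pow_apply hxp hΨ, sub_add_cancel]
    rw [← lowerWord_replicate_one]
    exact Submodule.smul_mem _ _ (lowerWord_mem_wordSpan (by simp) (by simp) (by simp))
  | cons t T ih =>
    have ht : 1 ≤ t := hP t List.mem_cons_self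
    have hT : ∀ a ∈ T, 1 ≤ a := fun a ha => hP a (List.mem_cons_of_mem t ha)
    have hsplit : B.xp j (B.lowerWord (t :: T ++ List.replicate (s + 2) 1) Ψ)
        + ((s + 2) * (s + 1) : ℂ) • B.lowerWord (t :: T ++ (j + 2) :: List.replicate s 1) Ψ
        = B.xm t (B.xp j (B.lowerWord (T ++ List.replicate (s + 2) 1) Ψ)
            + ((s + 2) * (s + 1) : ℂ) • B.lowerWord (T ++ (j + 2) :: List.replicate s 1) Ψ)
          + B.h (j + t) (B.lowerWord (T ++ List.replicate (s + 2) 1) Ψ) := by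
      simp only [List.cons_append, lowerWord_cons, xp_xm_apply B j ht, map_add, map_smul]
      abel
    have hh := h_lowerWord_mem_wordSpan hΨ (j + t) (one_le_of_mem_append_replicate hT (s + 2))
    rw [List.length_append, List.length_replicate, heavyCount_append, heavyCount_replicate_one,
      add_zero] at hh
    rw [hsplit, List.length_cons, Nat.add_right_comm _ 1 s]
    refine Submodule.add_mem _ (xm_mem_wordSpan ht ?_ (ih hT)) (wordSpan_mono ?_ hh)
    · simp only [heavyCount_cons, heavyCount_nil]
      split_ifs <;> omega
    · exact Nat.add_le_add_right (heavyCount_le_length T) 1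

theorem wordSpan_zero_le (m : ℕ) : B.wordSpan Ψ m 0 ≤ ℂ ∙ (B.xm 1 ^ m) Ψ := by
  refine Submodule.span_le.2 ?_
  rintro _ ⟨L, hm, hL, hc, rfl⟩
  have hL1 : ∀ a ∈ L, a = 1 := fun a ha => by
    have h2 : ¬2 ≤ a := by simpa using List.countP_eq_zero.1 (Nat.le_zero.1 hc) a ha
    have := hL a ha
    omega
  rw [List.eq_replicate_iff.2 ⟨hm, hL1⟩, lowerWord_replicate_one]
  exact Submodule.mem_span_singleton_self _

theorem xm_one_eq_zero_of_mem_wordSpan (hnil : (B.xm 1 ^ (r + 1)) Ψ = 0) {n : ℕ}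
    (hle : B.wordSpan Ψ r n ≤ ℂ ∙ (B.xm 1 ^ r) Ψ) {v : V} (hv : v ∈ B.wordSpan Ψ r n) :
    B.xm 1 v = 0 := by
  obtain ⟨A, rfl⟩ := Submodule.mem_span_singleton.1 (hle hv)
  rw [map_smul, ← xm_one_pow_succ_apply, hnil, smul_zero]

theorem lowerWord_append_cons_mem_span (hxp : ∀ k, B.xp k Ψ = 0)
    (hΨ : ∀ k, B.h k Ψ = d k • Ψ) (hnil : (B.xm 1 ^ (r + 1)) Ψ = 0) {n s t : ℕ}
    (hr : n + s + 1 = r) (hle : B.wordSpan Ψ r n ≤ ℂ ∙ (B.xm 1 ^ r) Ψ) {T : List ℕ}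
    (hT : ∀ a ∈ T, 1 ≤ a) (hTn : T.length = n) (ht : 2 ≤ t) :
    B.lowerWord (T ++ t :: List.replicate s 1) Ψ ∈ ℂ ∙ (B.xm 1 ^ r) Ψ := by
  have hword := one_le_of_mem_append_replicate hT (s + 1)
  have hzero : B.lowerWord (T ++ List.replicate (s + 2) 1) Ψ = 0 := by
    rw [List.replicate_succ, B.lowerWord_perm List.perm_middle (by simpa using hword),
      lowerWord_cons]
    refine xm_one_eq_zero_of_mem_wordSpan hnil hle (lowerWord_mem_wordSpan ?_ hword ?_)
    · simp only [List.length_append, List.length_replicate]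
      omega
    · simpa [hTn] using heavyCount_le_length T
  have hmem := xp_lowerWord_add_mem_wordSpan hxp hΨ (t - 2) s hT
  rw [hzero, map_zero, zero_add, Nat.sub_add_cancel ht, hTn, hr] at hmem
  have hc : ((s + 2) * (s + 1) : ℂ) ≠ 0 := by norm_cast
  exact (Submodule.smul_mem_iff _ hc).1 (hle hmem)

theorem wordSpan_le_span_xm_one_pow (hxp : ∀ k, B.xp k Ψ = 0) (hΨ : ∀ k, B.h k Ψ = d k • Ψ)
    (hnil : (B.xm 1 ^ (r + 1)) Ψ = 0) : ∀ n ≤ r, B.wordSpan Ψ r n ≤ ℂ ∙ (B.xm 1 ^ r) Ψ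
  | 0, _ => wordSpan_zero_le r
  | n + 1, hn => by
    have ih := wordSpan_le_span_xm_one_pow hxp hΨ hnil n (by omega)
    refine Submodule.span_le.2 ?_
    rintro _ ⟨L, hm, hL, hc, rfl⟩
    obtain hc | hc := Nat.lt_or_eq_of_le hc
    · exact ih (lowerWord_mem_wordSpan hm hL (Nat.lt_succ_iff.1 hc))
    obtain ⟨H, hH, hHlen, hperm⟩ := exists_perm_append_replicate_one hL
    obtain ⟨t, T, rfl⟩ := List.exists_of_length_succ H (hHlen.trans hc)
    rw [hm, hc] at hperm
    rw [B.lowerWord_perm (hperm.trans List.perm_middle.symm) hL]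
    refine lowerWord_append_cons_mem_span hxp hΨ hnil (by omega) ih
      (fun a ha => (hH a (List.mem_cons_of_mem t ha)).trans' one_le_two) ?_
      (hH t List.mem_cons_self)
    simpa using hHlen.trans hc

end HighestWeight

end BorelRep

theorem stmt6_general (B : BorelRep V) (Ψ : V) (d : ℕ → ℂ)
    (hxpΨ : ∀ k, B.xp k Ψ = 0) (hhΨ : ∀ k, B.h k Ψ = d k • Ψ)
    (r : ℕ) (hnil : ((B.xm 1) ^ (r + 1)) Ψ = 0) :
    ∀ n : ℕ, n ≤ r → ∀ k : Fin n → ℕ, (∀ i, 1 ≤ k i) →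
      ∃ A : ℂ, ((B.xm 1) ^ (r - n)) (((List.ofFn fun i => B.xm (k i)).prod) Ψ)
        = A • ((B.xm 1) ^ r) Ψ := by
  intro n hn k hk
  have hword : ((B.xm 1) ^ (r - n)) (((List.ofFn fun i => B.xm (k i)).prod) Ψ)
      = B.lowerWord (List.replicate (r - n) 1 ++ List.ofFn k) Ψ := by
    rw [B.lowerWord_append, B.lowerWord_replicate_one, BorelRep.lowerWord, List.map_ofFn]
    rfl
  have hmem : B.lowerWord (List.replicate (r - n) 1 ++ List.ofFn k) Ψ ∈ B.wordSpan Ψ r n := by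
    refine BorelRep.lowerWord_mem_wordSpan (by simp; omega) ?_ ?_
    · intro a ha
      rcases List.mem_append.1 ha with h | h
      · exact (List.eq_of_mem_replicate h).ge
      · obtain ⟨i, rfl⟩ := List.mem_ofFn.1 h
        exact hk i
    · simpa using heavyCount_le_length (List.ofFn k)
  obtain ⟨A, hA⟩ := Submodule.mem_span_singleton.1
    (BorelRep.wordSpan_le_span_xm_one_pow hxpΨ hhΨ hnil n hn hmem)
  exact ⟨A, hword.trans hA.symm⟩

/-- If `Ψ` is a highest weight vector of `U(B₀)` and `x_1^-` is nilpotent of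
degree `r` on `U(B₀)Ψ`, then for every `n ≤ r` and positive integers
`k_1, …, k_n` there is a scalar `A` with
`(x_1^-)^{r-n} x_{k_1}^- ⋯ x_{k_n}^- Ψ = A (x_1^-)^r Ψ`. -/
theorem stmt6 (B : BorelRep V) (Ψ : V) (d : ℕ → ℂ)
    (hxpΨ : ∀ k, B.xp k Ψ = 0) (hhΨ : ∀ k, B.h k Ψ = d k • Ψ)
    (r : ℕ) (hnil : ((B.xm 1) ^ (r + 1)) Ψ = 0) (hnz : ((B.xm 1) ^ r) Ψ ≠ 0) :
    ∀ n : ℕ, n ≤ r → ∀ k : Fin n → ℕ, (∀ i, 1 ≤ k i) →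
      ∃ A : ℂ, ((B.xm 1) ^ (r - n)) (((List.ofFn fun i => B.xm (k i)).prod) Ψ)
        = A • ((B.xm 1) ^ r) Ψ :=
  stmt6_general B Ψ d hxpΨ hhΨ r hnil
end

section
/- Let Ψ be a highest weight vector of U(B₀) with x_1^- nilpotent of degree r. Then Ψ is a simultaneous eigenvector of the operators (x_0^+)^{(j)}(x_1^-)^{(j)} for j = 1,...,r, where X^{(j)} = X^j / j!; i.e. there exist scalars λ_j with (x_0^+)^{(j)}(x_1^-)^{(j)} Ψ = λ_j Ψ. -/
open scoped BigOperators

variable {V : Type*} [AddCommGroup V] [Module ℂ V]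

/-- The span of vectors obtained from `Ψ` by applying `m` lowering operators. -/
def Wsp (B : BorelRep V) (Ψ : V) (m : ℕ) : Submodule ℂ V :=
  Submodule.span ℂ {v | ∃ l : List ℕ, l.length = m ∧ (∀ a ∈ l, 1 ≤ a) ∧
    v = (l.map B.xm).prod Ψ}

lemma xm_mem (B : BorelRep V) (Ψ : V) {m a : ℕ} (ha : 1 ≤ a) {v : V}
    (hv : v ∈ Wsp B Ψ m) : B.xm a v ∈ Wsp B Ψ (m + 1) := by
  induction hv using Submodule.span_induction with
  | mem x hx =>
    obtain ⟨l, hl, hall, rfl⟩ := hx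
    refine Submodule.subset_span ⟨a :: l, by simp [hl], ?_, ?_⟩
    · intro b hb
      rcases List.mem_cons.1 hb with rfl | hb
      · exact ha
      · exact hall b hb
    · simp [Module.End.mul_apply]
  | zero => simp [Submodule.zero_mem]
  | add x y _ _ hx hy => rw [map_add]; exact add_mem hx hy
  | smul c x _ hx => rw [map_smul]; exact Submodule.smul_mem _ _ hx

lemma gen_mem (B : BorelRep V) (Ψ : V) (l : List ℕ) (hall : ∀ a ∈ l, 1 ≤ a) :
    (l.map B.xm).prod Ψ ∈ Wsp B Ψ l.length :=
  Submodule.subset_span ⟨l, rfl, hall, rfl⟩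

lemma h_mem (B : BorelRep V) (Ψ : V) (d : ℕ → ℂ) (hh : ∀ k, B.h k Ψ = d k • Ψ)
    (j : ℕ) {m : ℕ} {v : V} (hv : v ∈ Wsp B Ψ m) : B.h j v ∈ Wsp B Ψ m := by
  induction hv using Submodule.span_induction with
  | mem x hx =>
    obtain ⟨l, hl, hall, rfl⟩ := hx
    subst hl
    induction l with
    | nil =>
      simp only [List.map_nil, List.prod_nil, Module.End.one_apply, hh j]
      exact Submodule.smul_mem _ _ (by simpa using gen_mem B Ψ [] (by simp))
    | cons a l ih =>
      have ha : 1 ≤ a := hall a (by simp)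
      have hall' : ∀ b ∈ l, 1 ≤ b := fun b hb => hall b (by simp [hb])
      have hrel := B.h_xm j a ha
      rw [Ring.lie_def, sub_eq_iff_eq_add] at hrel
      set w := (l.map B.xm).prod Ψ with hw
      have happ : B.h j (((a :: l).map B.xm).prod Ψ)
          = B.xm a (B.h j w) - (2 : ℕ) • (B.xm (j + a) w) := by
        have := congrArg (fun f : Module.End ℂ V => f w) hrel
        simp only [Module.End.mul_apply, LinearMap.add_apply, LinearMap.neg_apply,
          LinearMap.smul_apply] at this
        simp only [List.map_cons, List.prod_cons, Module.End.mul_apply]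
        rw [this]; abel
      rw [happ]
      simp only [List.length_cons]
      refine sub_mem ?_ (nsmul_mem ?_ 2)
      · exact xm_mem B Ψ ha (ih hall')
      · exact xm_mem B Ψ (by omega : 1 ≤ j + a) (gen_mem B Ψ l hall')
  | zero => simp [Submodule.zero_mem]
  | add x y _ _ hx hy => rw [map_add]; exact add_mem hx hy
  | smul c x _ hx => rw [map_smul]; exact Submodule.smul_mem _ _ hx

lemma xp_gen_mem (B : BorelRep V) (Ψ : V) (d : ℕ → ℂ)
    (hxp : ∀ k, B.xp k Ψ = 0) (hh : ∀ k, B.h k Ψ = d k • Ψ) (j : ℕ) :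
    ∀ l : List ℕ, (∀ a ∈ l, 1 ≤ a) →
      B.xp j ((l.map B.xm).prod Ψ) ∈ Wsp B Ψ (l.length - 1) := by
  intro l
  induction l with
  | nil => intro _; simp [hxp j, Submodule.zero_mem]
  | cons a l ih =>
    intro hall
    have ha : 1 ≤ a := hall a (by simp)
    have hall' : ∀ b ∈ l, 1 ≤ b := fun b hb => hall b (by simp [hb])
    have hrel := B.xp_xm j a ha
    rw [Ring.lie_def, sub_eq_iff_eq_add] at hrel
    set w := (l.map B.xm).prod Ψ with hw
    have happ : B.xp j (((a :: l).map B.xm).prod Ψ)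
        = B.xm a (B.xp j w) + B.h (j + a) w := by
      have := congrArg (fun f : Module.End ℂ V => f w) hrel
      simp only [Module.End.mul_apply, LinearMap.add_apply] at this
      simp only [List.map_cons, List.prod_cons, Module.End.mul_apply]
      rw [this]; ring_nf
      abel
    rw [happ]
    have hlen : (a :: l).length - 1 = l.length := by simp
    rw [hlen]
    refine add_mem ?_ (h_mem B Ψ d hh (j + a) (gen_mem B Ψ l hall'))
    cases l with
    | nil => simp only [hw, List.map_nil, List.prod_nil, Module.End.one_apply, hxp j,
        map_zero]; exact Submodule.zero_mem _
    | cons c l' =>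
      have := xm_mem B Ψ ha (ih hall')
      simpa using this

lemma xp_mem (B : BorelRep V) (Ψ : V) (d : ℕ → ℂ)
    (hxp : ∀ k, B.xp k Ψ = 0) (hh : ∀ k, B.h k Ψ = d k • Ψ) (j m : ℕ)
    {v : V} (hv : v ∈ Wsp B Ψ (m + 1)) : B.xp j v ∈ Wsp B Ψ m := by
  induction hv using Submodule.span_induction with
  | mem x hx =>
    obtain ⟨l, hl, hall, rfl⟩ := hx
    have := xp_gen_mem B Ψ d hxp hh j l hall
    rw [hl] at this
    simpa using this
  | zero => simp [Submodule.zero_mem]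
  | add x y _ _ hx hy => rw [map_add]; exact add_mem hx hy
  | smul c x _ hx => rw [map_smul]; exact Submodule.smul_mem _ _ hx

lemma key_eigen (B : BorelRep V) (Ψ : V) (d : ℕ → ℂ)
    (hxp : ∀ k, B.xp k Ψ = 0) (hh : ∀ k, B.h k Ψ = d k • Ψ) (j : ℕ) :
    ∃ c : ℂ, (((B.xp 0) ^ j) * ((B.xm 1) ^ j)) Ψ = c • Ψ := by
  have h1 : ((B.xm 1) ^ j) Ψ ∈ Wsp B Ψ j := by
    have := gen_mem B Ψ (List.replicate j 1) (by simp)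
    simpa [List.map_replicate, List.prod_replicate] using this
  have h2 : ∀ n, ∀ v ∈ Wsp B Ψ n, ((B.xp 0) ^ n) v ∈ Wsp B Ψ 0 := by
    intro n
    induction n with
    | zero => intro v hv; simpa using hv
    | succ n ih =>
      intro v hv
      rw [pow_succ, Module.End.mul_apply]
      exact ih _ (xp_mem B Ψ d hxp hh 0 n hv)
  have h3 := h2 j _ h1
  have h4 : Wsp B Ψ 0 ≤ Submodule.span ℂ {Ψ} := by
    apply Submodule.span_le.2
    rintro v ⟨l, hl, -, rfl⟩
    rw [List.length_eq_zero_iff] at hl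
    subst hl
    simpa using Submodule.mem_span_singleton_self Ψ
  obtain ⟨c, hc⟩ := Submodule.mem_span_singleton.1 (h4 h3)
  exact ⟨c, by rw [Module.End.mul_apply]; exact hc.symm⟩

/-- If `Ψ` is a highest weight vector of `U(B₀)` with `x_1^-` nilpotent of
degree `r`, then `Ψ` is a simultaneous eigenvector of the divided-power
operators `(x_0^+)^{(j)} (x_1^-)^{(j)} = (x_0^+)^j (x_1^-)^j / (j!)^2` for
`j = 1, …, r`, with eigenvalues `λ_j`. -/
theorem stmt8 (B : BorelRep V) (Ψ : V) (d : ℕ → ℂ)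
    (hxpΨ : ∀ k, B.xp k Ψ = 0) (hhΨ : ∀ k, B.h k Ψ = d k • Ψ)
    (r : ℕ) (hnil : ((B.xm 1) ^ (r + 1)) Ψ = 0) (hnz : ((B.xm 1) ^ r) Ψ ≠ 0) :
    ∃ lam : ℕ → ℂ, ∀ j, 1 ≤ j → j ≤ r →
      (((B.xp 0) ^ j) * ((B.xm 1) ^ j)) Ψ
        = (((j.factorial : ℂ)) ^ 2 * lam j) • Ψ := by
  refine ⟨fun j => (key_eigen B Ψ d hxpΨ hhΨ j).choose / ((j.factorial : ℂ)) ^ 2,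
    fun j _ _ => ?_⟩
  have hc := (key_eigen B Ψ d hxpΨ hhΨ j).choose_spec
  rw [hc]
  congr 1
  have hne : ((j.factorial : ℂ)) ^ 2 ≠ 0 :=
    pow_ne_zero _ (Nat.cast_ne_zero.2 j.factorial_ne_zero)
  rw [mul_comm, div_mul_cancel₀ _ hne]
end

section
/- In the Borel subalgebra U(B₀), for every n ≥ 1 one has (x_0^+)^{(n)}(x_1^-)^{(n)} ≡ (1/n) Σ_{k=1}^n (-1)^{k-1} h_k (x_0^+)^{(n-k)} (x_1^-)^{(n-k)} modulo the left ideal U(B₀)·B₀^+. -/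
open scoped BigOperators

set_option linter.unusedSectionVars false
set_option linter.unnecessarySimpa false
set_option linter.unusedTactic false
set_option maxHeartbeats 2000000

namespace Stmt11

variable {A : Type*} [Ring A] [Algebra ℂ A]

def idl (xp : ℕ → A) : Submodule A A := Submodule.span A {a | ∃ k, a = xp k}

structure Rel (xp xm h : ℕ → A) : Prop where
  hp : ∀ j k, h j * xp k - xp k * h j = 2 • xp (j + k)
  hm : ∀ j k, 1 ≤ k → h j * xm k - xm k * h j = -(2 • xm (j + k))
  pm : ∀ j k, 1 ≤ k → xp j * xm k - xm k * xp j = h (j + k)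
  hh : ∀ j k, h j * h k = h k * h j
  pp : ∀ j k, xp j * xp k = xp k * xp j
  mm : ∀ j k, 1 ≤ j → 1 ≤ k → xm j * xm k = xm k * xm j

variable {xp xm h : ℕ → A}

lemma xp_mem (k : ℕ) : xp k ∈ idl xp := Submodule.subset_span ⟨k, rfl⟩

lemma Imul {x : A} (z : A) (hx : x ∈ idl xp) : z * x ∈ idl xp := by
  simpa [smul_eq_mul] using (idl xp).smul_mem z hx

lemma Itrail (z : A) (k : ℕ) : z * xp k ∈ idl xp := Imul z (xp_mem k)

lemma Icsmul {x : A} (c : ℂ) (hx : x ∈ idl xp) : c • x ∈ idl xp := by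
  rw [Algebra.smul_def]; exact Imul _ hx

lemma Imulh (R : Rel xp xm h) {x : A} (hx : x ∈ idl xp) (j : ℕ) :
    x * h j ∈ idl xp := by
  induction hx using Submodule.span_induction with
  | mem a ha =>
      obtain ⟨k, rfl⟩ := ha
      have e1 : xp k * h j = h j * xp k - 2 • xp (j + k) := by
        rw [← R.hp j k]; abel
      rw [e1]
      exact sub_mem (Itrail _ k) (nsmul_mem (xp_mem (j+k)) 2)
  | zero => simpa using (idl xp).zero_mem
  | add a b _ _ ha hb => rw [add_mul]; exact add_mem ha hb
  | smul z a _ ha => rw [smul_eq_mul, mul_assoc]; exact Imul z ha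

lemma nsmul_eq_csmul (n : ℕ) (x : A) : n • x = ((n : ℂ)) • x :=
  (Nat.cast_smul_eq_nsmul ℂ n x).symm

lemma hp' (R : Rel xp xm h) (j k : ℕ) :
    h j * xp k = xp k * h j + (2 : ℂ) • xp (j + k) := by
  have hh := R.hp j k
  rw [nsmul_eq_csmul] at hh
  push_cast at hh
  rw [sub_eq_iff_eq_add] at hh
  rw [hh]; abel

lemma hm' (R : Rel xp xm h) (j k : ℕ) (hk : 1 ≤ k) :
    h j * xm k = xm k * h j - (2 : ℂ) • xm (j + k) := by
  have hh := R.hm j k hk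
  rw [nsmul_eq_csmul] at hh
  push_cast at hh
  rw [sub_eq_iff_eq_add] at hh
  rw [hh]; abel

lemma pm' (R : Rel xp xm h) (j k : ℕ) (hk : 1 ≤ k) :
    xp j * xm k = xm k * xp j + h (j + k) := by
  have hh := R.pm j k hk
  rw [sub_eq_iff_eq_add] at hh
  rw [hh]; abel

lemma pow_merge1 (x y : A) (n : ℕ) : x ^ n * (x * y) = x^(n+1) * y := by
  rw [← mul_assoc, ← pow_succ]
lemma pow_merge2 (x y : A) (n : ℕ) : x * (x ^ n * y) = x^(n+1) * y := by
  rw [← mul_assoc, ← pow_succ']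
lemma pow_merge3 (x y : A) : x * (x * y) = x^2 * y := by
  rw [← mul_assoc, ← pow_two]
lemma pow_merge4 (x : A) (n : ℕ) : x ^ n * x = x^(n+1) := (pow_succ x n).symm
lemma pow_merge5 (x : A) (n : ℕ) : x * x ^ n = x^(n+1) := (pow_succ' x n).symm
lemma pow_merge6 (x : A) : x * x = x^2 := (pow_two x).symm

-- A1
lemma powHP (R : Rel xp xm h) (j k m : ℕ) :
    h j * xp k ^ (m+1) = xp k ^ (m+1) * h j
      + ((2*(m+1) : ℕ) : ℂ) • (xp k ^ m * xp (j+k)) := by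
  induction m with
  | zero => push_cast; simpa using hp' R j k
  | succ m ih =>
      have step : h j * xp k ^ (m+2) = (h j * xp k ^ (m+1)) * xp k := by
        rw [pow_succ, ← mul_assoc]
      rw [step, ih, add_mul, smul_mul_assoc, mul_assoc, mul_assoc, hp' R j k,
        R.pp (j+k) k]
      push_cast
      rw [mul_add, ← mul_assoc, ← pow_succ, mul_smul_comm, ← mul_assoc, ← pow_succ]
      module
-- A2
lemma powHM (R : Rel xp xm h) (j m : ℕ) :
    h j * xm 1 ^ (m+1) = xm 1 ^ (m+1) * h j
      - ((2*(m+1) : ℕ) : ℂ) • (xm 1 ^ m * xm (j+1)) := by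
  induction m with
  | zero => push_cast; simpa using hm' R j 1 le_rfl
  | succ m ih =>
      have step : h j * xm 1 ^ (m+2) = (h j * xm 1 ^ (m+1)) * xm 1 := by
        rw [pow_succ, ← mul_assoc]
      rw [step, ih, sub_mul, smul_mul_assoc, mul_assoc, mul_assoc,
        hm' R j 1 le_rfl, R.mm (j+1) 1 (by omega) le_rfl]
      push_cast
      simp only [mul_add, add_mul, mul_sub, sub_mul, smul_add, smul_sub, smul_smul,
        smul_mul_assoc, mul_smul_comm, mul_assoc, pow_merge1, pow_merge2, pow_merge3,
        pow_merge4, pow_merge5, pow_merge6]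
      module

-- A3a
lemma ef1 (R : Rel xp xm h) (j : ℕ) :
    xp j * xm 1 = xm 1 * xp j + h (j+1) := pm' R j 1 le_rfl

-- A3b
lemma powPF (R : Rel xp xm h) (j m : ℕ) :
    xp j * xm 1 ^ (m+2) = xm 1 ^ (m+2) * xp j
      + ((m+2 : ℕ) : ℂ) • (xm 1 ^ (m+1) * h (j+1))
      - (((m+2)*(m+1) : ℕ) : ℂ) • (xm 1 ^ m * xm (j+2)) := by
  have e3 : j + 1 + 1 = j + 2 := by omega
  induction m with
  | zero =>
      have step : xp j * xm 1 ^ 2 = (xp j * xm 1) * xm 1 := by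
        rw [pow_two, ← mul_assoc]
      rw [step, ef1 R j, add_mul, mul_assoc, ef1 R j, hm' R (j+1) 1 le_rfl, e3]
      push_cast
      simp only [mul_add, add_mul, mul_sub, sub_mul, smul_add, smul_sub, smul_smul,
        smul_mul_assoc, mul_smul_comm, mul_assoc, pow_merge1, pow_merge2, pow_merge3,
        pow_merge4, pow_merge5, pow_merge6, pow_zero, pow_one, one_mul, zero_add]
      module
  | succ m ih =>
      have step : xp j * xm 1 ^ (m+3) = (xp j * xm 1 ^ (m+2)) * xm 1 := by
        rw [pow_succ, ← mul_assoc]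
      rw [step, ih, sub_mul, add_mul, smul_mul_assoc, smul_mul_assoc,
        mul_assoc, mul_assoc, mul_assoc, ef1 R j, hm' R (j+1) 1 le_rfl,
        R.mm (j+2) 1 (by omega) le_rfl, e3]
      push_cast
      simp only [mul_add, add_mul, mul_sub, sub_mul, smul_add, smul_sub, smul_smul,
        smul_mul_assoc, mul_smul_comm, mul_assoc, pow_merge1, pow_merge2, pow_merge3,
        pow_merge4, pow_merge5, pow_merge6]
      have g1 : m + 2 + 1 = m + 3 := by omega
      have g2 : m + 1 + 1 = m + 2 := by omega
      have g3 : m + 1 + 2 = m + 3 := by omega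
      rw [g1, g2, g3]
      module

-- A4a
lemma exm (R : Rel xp xm h) (k : ℕ) (hk : 1 ≤ k) :
    xp 0 * xm k = xm k * xp 0 + h k := by
  simpa using pm' R 0 k hk

-- A4b
lemma powEXM (R : Rel xp xm h) (k m : ℕ) (hk : 1 ≤ k) :
    xp 0 ^ (m+2) * xm k = xm k * xp 0 ^ (m+2)
      + ((m+2 : ℕ) : ℂ) • (xp 0 ^ (m+1) * h k)
      + (((m+2)*(m+1) : ℕ) : ℂ) • (xp 0 ^ m * xp k) := by
  induction m with
  | zero =>
      have step : xp 0 ^ 2 * xm k = xp 0 * (xp 0 * xm k) := by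
        rw [pow_two, mul_assoc]
      have hke : h k * xp 0 = xp 0 * h k + (2:ℂ) • xp k := by
        simpa using hp' R k 0
      rw [step, exm R k hk, mul_add, ← mul_assoc, exm R k hk, add_mul,
        mul_assoc, hke]
      push_cast
      simp only [mul_add, add_mul, smul_add, smul_smul, smul_mul_assoc,
        mul_smul_comm, mul_assoc, pow_merge1, pow_merge2, pow_merge3,
        pow_merge4, pow_merge5, pow_merge6, pow_zero, pow_one, one_mul, zero_add]
      module
  | succ m ih =>
      have step : xp 0 ^ (m+3) * xm k = xp 0 * (xp 0 ^ (m+2) * xm k) := by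
        rw [pow_succ', mul_assoc]
      have hke := powHP R k 0 (m+1)
      simp only [add_zero] at hke
      have g2 : m + 1 + 1 = m + 2 := by omega
      rw [g2] at hke
      rw [step, ih, mul_add, mul_add, ← mul_assoc, exm R k hk, add_mul,
        mul_assoc, hke]
      push_cast
      simp only [mul_add, add_mul, smul_add, smul_smul, smul_mul_assoc,
        mul_smul_comm, mul_assoc, pow_merge1, pow_merge2, pow_merge3,
        pow_merge4, pow_merge5, pow_merge6]
      have g1 : m + 2 + 1 = m + 3 := by omega
      have g3 : m + 1 + 2 = m + 3 := by omega
      rw [g1, g3]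
      module
noncomputable def dE (xp : ℕ → A) (m : ℕ) : A := ((m.factorial : ℂ))⁻¹ • (xp 0)^m
noncomputable def dF (xm : ℕ → A) (m : ℕ) : A := ((m.factorial : ℂ))⁻¹ • (xm 1)^m
noncomputable def aa (xp xm : ℕ → A) (m : ℕ) : A := dE xp m * dF xm m

lemma dE_zero : dE xp 0 = 1 := by simp [dE]
lemma dF_zero : dF xm 0 = 1 := by simp [dF]
lemma dE_one : dE xp 1 = xp 0 := by simp [dE]
lemma dF_one : dF xm 1 = xm 1 := by simp [dF]
lemma aa_zero : aa xp xm 0 = 1 := by simp [aa, dE_zero, dF_zero]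

lemma factC_ne (m : ℕ) : ((m.factorial : ℂ)) ≠ 0 := by
  exact_mod_cast Nat.cast_ne_zero.mpr (Nat.factorial_ne_zero m)

lemma factC_succ (m : ℕ) : ((m+1).factorial : ℂ) = ((m:ℂ)+1) * (m.factorial : ℂ) := by
  push_cast [Nat.factorial_succ]; ring

lemma factC_succ2 (m : ℕ) : ((m+2).factorial : ℂ) = ((m:ℂ)+2) * (((m:ℂ)+1) * (m.factorial : ℂ)) := by
  push_cast [Nat.factorial_succ]; ring

-- B1
lemma dHE (R : Rel xp xm h) (j m : ℕ) :
    h j * dE xp (m+1) = dE xp (m+1) * h j + (2:ℂ) • (dE xp m * xp j) := by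
  have hh0 := powHP R j 0 m
  simp only [add_zero] at hh0
  have hf := factC_ne m
  have hc1 : ((m:ℂ)+1) ≠ 0 := Nat.cast_add_one_ne_zero m
  rw [dE, dE, mul_smul_comm, hh0]
  simp only [smul_add, smul_smul, smul_mul_assoc]
  match_scalars
  · ring
  · rw [factC_succ]; push_cast; field_simp; try ring

-- B2
lemma dHF (R : Rel xp xm h) (j m : ℕ) :
    h j * dF xm (m+1) = dF xm (m+1) * h j - (2:ℂ) • (dF xm m * xm (j+1)) := by
  have hf := factC_ne m
  have hc1 : ((m:ℂ)+1) ≠ 0 := Nat.cast_add_one_ne_zero m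
  rw [dF, dF, mul_smul_comm, powHM R j m]
  simp only [smul_sub, smul_smul, smul_mul_assoc]
  match_scalars
  · ring
  · rw [factC_succ]; push_cast; field_simp; try ring

-- B3a
lemma dPF1 (R : Rel xp xm h) (j : ℕ) :
    xp j * dF xm 1 = dF xm 1 * xp j + h (j+1) := by
  rw [dF_one]; exact ef1 R j

-- B3
lemma dPF (R : Rel xp xm h) (j m : ℕ) :
    xp j * dF xm (m+2) = dF xm (m+2) * xp j + dF xm (m+1) * h (j+1)
      - dF xm m * xm (j+2) := by
  have hf := factC_ne m
  have hf1 := factC_ne (m+1)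
  have hc1 : ((m:ℂ)+1) ≠ 0 := Nat.cast_add_one_ne_zero m
  have hc2 : ((m:ℂ)+2) ≠ 0 := by
    have h0 : ((m+2 : ℕ) : ℂ) ≠ 0 := Nat.cast_ne_zero.mpr (by omega)
    push_cast at h0; exact h0
  rw [dF, dF, dF, mul_smul_comm, powPF R j m]
  simp only [smul_add, smul_sub, smul_smul, smul_mul_assoc]
  match_scalars
  · ring
  · rw [factC_succ2, factC_succ]; push_cast; field_simp; try ring
  · rw [factC_succ2]; push_cast; field_simp; try ring

-- B4a
lemma dEXM1 (R : Rel xp xm h) (k : ℕ) (hk : 1 ≤ k) :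
    dE xp 1 * xm k = xm k * dE xp 1 + h k := by
  rw [dE_one]; exact exm R k hk

-- B4
lemma dEXM (R : Rel xp xm h) (k m : ℕ) (hk : 1 ≤ k) :
    dE xp (m+2) * xm k = xm k * dE xp (m+2) + dE xp (m+1) * h k
      + dE xp m * xp k := by
  have hf := factC_ne m
  have hf1 := factC_ne (m+1)
  have hc1 : ((m:ℂ)+1) ≠ 0 := Nat.cast_add_one_ne_zero m
  have hc2 : ((m:ℂ)+2) ≠ 0 := by
    have h0 : ((m+2 : ℕ) : ℂ) ≠ 0 := Nat.cast_ne_zero.mpr (by omega)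
    push_cast at h0; exact h0
  rw [dE, dE, dE, smul_mul_assoc, powEXM R k m hk]
  simp only [smul_add, smul_smul, smul_mul_assoc, mul_smul_comm]
  match_scalars
  · ring
  · rw [factC_succ2, factC_succ]; push_cast; field_simp; try ring
  · rw [factC_succ2]; push_cast; field_simp; try ring

-- B5
lemma dE_succ (m : ℕ) : ((m+1 : ℕ) : ℂ) • dE xp (m+1) = dE xp m * xp 0 := by
  have hf := factC_ne m
  have hc1 : ((m:ℂ)+1) ≠ 0 := Nat.cast_add_one_ne_zero m
  rw [dE, dE, smul_smul, smul_mul_assoc, ← pow_succ]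
  match_scalars
  rw [factC_succ]; push_cast; field_simp

-- commutation of xm k with dF powers
lemma dF_comm_xm (R : Rel xp xm h) (k m : ℕ) (hk : 1 ≤ k) :
    dF xm m * xm k = xm k * dF xm m := by
  rw [dF, smul_mul_assoc, mul_smul_comm]
  congr 1
  exact ((Commute.pow_left (R.mm 1 k le_rfl hk) m))
lemma LZ0 (t : ℕ) (ht : 0 < t) : xp 0 ^ t ∈ idl xp := by
  obtain ⟨u, rfl⟩ : ∃ u, t = u + 1 := ⟨t - 1, by omega⟩
  rw [pow_succ]
  exact Itrail _ 0

lemma LZboth (R : Rel xp xm h) :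
    ∀ r : ℕ, (∀ s, r < s → xp 0 ^ s * xm 1 ^ r ∈ idl xp) ∧
      (∀ s k, r + 1 < s → 1 ≤ k → xp 0 ^ s * xm 1 ^ r * xm k ∈ idl xp) := by
  intro r
  induction r using Nat.strong_induction_on with
  | _ r IH =>
  have part1 : ∀ s, r < s → xp 0 ^ s * xm 1 ^ r ∈ idl xp := by
    intro s hs
    match r with
    | 0 => simpa using LZ0 s (by omega)
    | 1 =>
        obtain ⟨t, rfl⟩ : ∃ t, s = t + 1 := ⟨s - 1, by omega⟩
        have dec : xp 0 ^ (t+1) * xm 1 ^ 1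
            = (xp 0 ^ t * xm 1) * xp 0 + xp 0 ^ t * h 1 := by
          rw [pow_succ, pow_one, mul_assoc, show xp 0 * xm 1 = xm 1 * xp 0 + h 1 by
            simpa using ef1 R 0]
          simp only [mul_add, mul_assoc]
        rw [dec]
        exact add_mem (Itrail _ 0) (Imulh R (LZ0 t (by omega)) 1)
    | (m+2) =>
        obtain ⟨t, rfl⟩ : ∃ t, s = t + 1 := ⟨s - 1, by omega⟩
        have dec : xp 0 ^ (t+1) * xm 1 ^ (m+2)
            = (xp 0 ^ t * xm 1 ^ (m+2)) * xp 0
              + ((m+2 : ℕ) : ℂ) • ((xp 0 ^ t * xm 1 ^ (m+1)) * h 1)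
              - (((m+2)*(m+1) : ℕ) : ℂ) • (xp 0 ^ t * xm 1 ^ m * xm 2) := by
          rw [pow_succ, mul_assoc, show xp 0 * xm 1 ^ (m+2) = xm 1 ^ (m+2) * xp 0
              + ((m+2 : ℕ) : ℂ) • (xm 1 ^ (m+1) * h 1)
              - (((m+2)*(m+1) : ℕ) : ℂ) • (xm 1 ^ m * xm 2) by simpa using powPF R 0 m]
          simp only [mul_add, mul_sub, mul_smul_comm, mul_assoc]
        rw [dec]
        refine sub_mem (add_mem (Itrail _ 0) (Icsmul _ (Imulh R ?_ 1))) (Icsmul _ ?_)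
        · exact (IH (m+1) (by omega)).1 t (by omega)
        · exact (IH m (by omega)).2 t 2 (by omega) (by omega)
  refine ⟨part1, ?_⟩
  intro s k hs hk
  obtain ⟨m, rfl⟩ : ∃ m, s = m + 2 := ⟨s - 2, by omega⟩
  have comm : xm 1 ^ r * xm k = xm k * xm 1 ^ r :=
    (Commute.pow_left (R.mm 1 k le_rfl hk) r)
  have dec : xp 0 ^ (m+2) * xm 1 ^ r * xm k
      = xm k * (xp 0 ^ (m+2) * xm 1 ^ r)
        + ((m+2 : ℕ) : ℂ) • (xp 0 ^ (m+1) * (h k * xm 1 ^ r))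
        + (((m+2)*(m+1) : ℕ) : ℂ) • (xp 0 ^ m * (xp k * xm 1 ^ r)) := by
    rw [mul_assoc, comm, ← mul_assoc, powEXM R k m hk]
    simp only [add_mul, smul_mul_assoc, mul_assoc]
  rw [dec]
  refine add_mem (add_mem (Imul _ (part1 _ (by omega))) (Icsmul _ ?_)) (Icsmul _ ?_)
  · -- xp 0 ^ (m+1) * (h k * xm 1 ^ r) ∈ idl
    match r, hs with
    | 0, _ => simpa using Imulh R (LZ0 (m+1) (by omega)) k
    | (rr+1), hs =>
        rw [powHM R k rr, mul_sub, mul_smul_comm]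
        refine sub_mem ?_ (Icsmul _ ?_)
        · rw [← mul_assoc]
          exact Imulh R (part1 (m+1) (by omega)) k
        · rw [← mul_assoc]
          exact (IH rr (by omega)).2 (m+1) (k+1) (by omega) (by omega)
  · -- xp 0 ^ m * (xp k * xm 1 ^ r) ∈ idl
    match r, hs with
    | 0, _ => simpa using Itrail (xp 0 ^ m) k
    | 1, hs =>
        rw [pow_one, ef1 R k, mul_add, ← mul_assoc]
        exact add_mem (Itrail _ k) (Imulh R (LZ0 m (by omega)) (k+1))
    | (rr+2), hs =>
        rw [powPF R k rr]
        simp only [mul_add, mul_sub, mul_smul_comm]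
        refine sub_mem (add_mem ?_ (Icsmul _ ?_)) (Icsmul _ ?_)
        · rw [← mul_assoc]; exact Itrail _ k
        · rw [← mul_assoc]
          exact Imulh R ((IH (rr+1) (by omega)).1 m (by omega)) (k+1)
        · rw [← mul_assoc]
          exact (IH rr (by omega)).2 m (k+2) (by omega) (by omega)
lemma LZdiv (R : Rel xp xm h) {r s : ℕ} (hrs : r < s) : dE xp s * dF xm r ∈ idl xp := by
  rw [dE, dF, smul_mul_assoc, mul_smul_comm]
  exact Icsmul _ (Icsmul _ ((LZboth R r).1 s hrs))

-- congruence mod idl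
def Cg (xp : ℕ → A) (x y : A) : Prop := x - y ∈ idl xp

lemma cg_of_eq {x y : A} (e : x = y) : Cg xp x y := by
  rw [Cg, e, sub_self]; exact zero_mem _
lemma cg_refl (x : A) : Cg xp x x := cg_of_eq rfl
lemma cg_of_mem {x : A} (hx : x ∈ idl xp) : Cg xp x 0 := by
  simpa [Cg] using hx
lemma cg_trans {x y z : A} (h1 : Cg xp x y) (h2 : Cg xp y z) : Cg xp x z := by
  have := add_mem h1 h2; simpa [Cg] using this
lemma cg_symm {x y : A} (h1 : Cg xp x y) : Cg xp y x := by
  have := neg_mem h1; simpa [Cg] using this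
lemma cg_add {a b c d : A} (h1 : Cg xp a b) (h2 : Cg xp c d) : Cg xp (a + c) (b + d) := by
  have := add_mem h1 h2
  simpa [Cg, sub_add_sub_comm] using this
lemma cg_sub {a b c d : A} (h1 : Cg xp a b) (h2 : Cg xp c d) : Cg xp (a - c) (b - d) := by
  have := sub_mem h1 h2
  have e : a - b - (c - d) = a - c - (b - d) := by abel
  rw [Cg, ← e]; exact this
lemma cg_csmul {a b : A} (c : ℂ) (h1 : Cg xp a b) : Cg xp (c • a) (c • b) := by
  have := Icsmul c h1
  rw [Cg, ← smul_sub]; exact this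
lemma cg_mul_left {a b : A} (z : A) (h1 : Cg xp a b) : Cg xp (z * a) (z * b) := by
  have := Imul z h1
  rw [Cg, ← mul_sub]; exact this

noncomputable def SS (xp xm h : ℕ → A) (m k : ℕ) : A :=
  ∑ j ∈ Finset.range (m+1), ((-1:ℂ))^j • (aa xp xm (m-j) * h (k+j))

lemma SS_zero (k : ℕ) : SS xp xm h 0 k = aa xp xm 0 * h k := by
  simp [SS]

lemma Srec (m k : ℕ) :
    SS xp xm h (m+1) k = aa xp xm (m+1) * h k - SS xp xm h m (k+1) := by
  rw [SS, Finset.sum_range_succ']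
  have e0 : ((-1:ℂ))^0 • (aa xp xm (m+1-0) * h (k+0)) = aa xp xm (m+1) * h k := by
    norm_num
  rw [e0]
  have e1 : ∀ i ∈ Finset.range (m+1),
      ((-1:ℂ))^(i+1) • (aa xp xm (m+1-(i+1)) * h (k+(i+1)))
        = -(((-1:ℂ))^i • (aa xp xm (m-i) * h ((k+1)+i))) := by
    intro i _
    have g1 : m+1-(i+1) = m-i := by omega
    have g2 : k+(i+1) = (k+1)+i := by omega
    rw [g1, g2, pow_succ, mul_neg_one, neg_smul]
  rw [Finset.sum_congr rfl e1, Finset.sum_neg_distrib, SS]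
  abel

-- claimP
lemma claimP (R : Rel xp xm h) :
    ∀ r k, 1 ≤ k → Cg xp (dE xp (r+1) * dF xm r * xm k) (SS xp xm h r k) := by
  intro r
  induction r using Nat.strong_induction_on with
  | _ r IH =>
  intro k hk
  match r with
  | 0 =>
      rw [SS_zero, aa_zero, one_mul, dF_zero, mul_one, dEXM1 R k hk]
      have e : xm k * dE xp 1 + h k - h k = xm k * dE xp 1 := by abel
      rw [Cg, e, dE_one]
      exact Itrail _ 0
  | 1 =>
      have dec : dE xp 2 * dF xm 1 * xm k
          = xm k * (dE xp 2 * dF xm 1) + aa xp xm 1 * h k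
            - (2:ℂ) • (dE xp 1 * dF xm 0 * xm (k+1))
            + dE xp 0 * dF xm 1 * xp k
            + aa xp xm 0 * h (k+1) := by
        rw [mul_assoc, dF_comm_xm R k 1 hk, ← mul_assoc, dEXM R k 0 hk,
          add_mul, add_mul, mul_assoc (dE xp 1), dHF R k 0,
          mul_assoc (dE xp 0), dPF1 R k]
        simp only [aa, zero_add, dF_zero, dE_zero, mul_one, one_mul, mul_add,
          mul_sub, mul_smul_comm, smul_mul_assoc, mul_assoc]
        module
      refine cg_trans (cg_of_eq dec) (cg_trans
        (y := 0 + aa xp xm 1 * h k - (2:ℂ) • SS xp xm h 0 (k+1) + 0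
          + aa xp xm 0 * h (k+1)) ?_ (cg_of_eq ?_))
      · refine cg_add (cg_add (cg_sub (cg_add (cg_of_mem ?_) (cg_refl _))
          (cg_csmul _ (IH 0 (by omega) (k+1) (by omega)))) (cg_of_mem ?_)) (cg_refl _)
        · exact Imul _ (LZdiv R (by omega))
        · exact Itrail _ k
      · rw [Srec 0 k]
        simp only [SS_zero]
        module
  | (m+2) =>
      rw [show m+2+1 = m+1+2 from rfl]
      have dec : dE xp (m+1+2) * dF xm (m+2) * xm k
          = xm k * (dE xp (m+1+2) * dF xm (m+2))
            + aa xp xm (m+2) * h k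
            - (2:ℂ) • (dE xp (m+1+1) * dF xm (m+1) * xm (k+1))
            + dE xp (m+1) * dF xm (m+2) * xp k
            + aa xp xm (m+1) * h (k+1)
            - dE xp (m+1) * dF xm m * xm (k+2) := by
        rw [mul_assoc, dF_comm_xm R k (m+2) hk, ← mul_assoc, dEXM R k (m+1) hk,
          add_mul, add_mul, mul_assoc (dE xp (m+1+1)), dHF R k (m+1),
          mul_assoc (dE xp (m+1)), dPF R k m]
        simp only [aa, mul_add, mul_sub, mul_smul_comm, smul_mul_assoc, mul_assoc]
        rw [show m+1+1 = m+2 from rfl]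
        module
      refine cg_trans (cg_of_eq dec) (cg_trans
        (y := 0 + aa xp xm (m+2) * h k - (2:ℂ) • SS xp xm h (m+1) (k+1) + 0
          + aa xp xm (m+1) * h (k+1) - SS xp xm h m (k+2)) ?_ (cg_of_eq ?_))
      · refine cg_sub (cg_add (cg_add (cg_sub (cg_add (cg_of_mem ?_) (cg_refl _))
          (cg_csmul _ (IH (m+1) (by omega) (k+1) (by omega)))) (cg_of_mem ?_))
          (cg_refl _)) (IH m (by omega) (k+2) (by omega))
        · exact Imul _ (LZdiv R (by omega))
        · exact Itrail _ k
      · rw [Srec (m+1) k, Srec m (k+1), show k+1+1 = k+2 from rfl]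
        module

-- Hcomm
lemma hcomm (R : Rel xp xm h) (j m : ℕ) :
    Cg xp (h j * aa xp xm m) (aa xp xm m * h j) := by
  match m with
  | 0 => rw [aa_zero, one_mul, mul_one]; exact cg_refl _
  | 1 =>
      have dec : h j * aa xp xm 1
          = aa xp xm 1 * h j
            - (2:ℂ) • (dE xp 1 * dF xm 0 * xm (j+1))
            + (2:ℂ) • (dE xp 0 * dF xm 1 * xp j)
            + (2:ℂ) • (aa xp xm 0 * h (j+1)) := by
        rw [aa, ← mul_assoc, dHE R j 0, add_mul, mul_assoc (dE xp 1), dHF R j 0,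
          smul_mul_assoc, mul_assoc (dE xp 0), dPF1 R j]
        simp only [aa, zero_add, dF_zero, dE_zero, mul_one, one_mul, mul_add,
          mul_sub, mul_smul_comm, smul_mul_assoc, smul_add, smul_sub, mul_assoc]
        module
      refine cg_trans (cg_of_eq dec) (cg_trans
        (y := aa xp xm 1 * h j - (2:ℂ) • SS xp xm h 0 (j+1) + (2:ℂ) • (0:A)
          + (2:ℂ) • (aa xp xm 0 * h (j+1))) ?_ (cg_of_eq ?_))
      · refine cg_add (cg_add (cg_sub (cg_refl _)
          (cg_csmul _ (claimP R 0 (j+1) (by omega)))) (cg_csmul _ (cg_of_mem ?_)))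
          (cg_refl _)
        · exact Itrail _ j
      · simp only [SS_zero]
        module
  | (mm+2) =>
      have dec : h j * aa xp xm (mm+2)
          = aa xp xm (mm+2) * h j
            - (2:ℂ) • (dE xp (mm+1+1) * dF xm (mm+1) * xm (j+1))
            + (2:ℂ) • (dE xp (mm+1) * dF xm (mm+2) * xp j)
            + (2:ℂ) • (aa xp xm (mm+1) * h (j+1))
            - (2:ℂ) • (dE xp (mm+1) * dF xm mm * xm (j+2)) := by
        rw [aa, ← mul_assoc, show mm+2 = mm+1+1 from rfl, dHE R j (mm+1), add_mul,
          mul_assoc (dE xp (mm+1+1)), dHF R j (mm+1),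
          smul_mul_assoc, mul_assoc (dE xp (mm+1)), show mm+1+1 = mm+2 from rfl,
          dPF R j mm]
        simp only [aa, mul_add, mul_sub, mul_smul_comm, smul_mul_assoc, smul_add,
          smul_sub, mul_assoc]
        rw [show mm+1+1 = mm+2 from rfl]
        module
      refine cg_trans (cg_of_eq dec) (cg_trans
        (y := aa xp xm (mm+2) * h j - (2:ℂ) • SS xp xm h (mm+1) (j+1)
          + (2:ℂ) • (0:A) + (2:ℂ) • (aa xp xm (mm+1) * h (j+1))
          - (2:ℂ) • SS xp xm h mm (j+2)) ?_ (cg_of_eq ?_))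
      · refine cg_sub (cg_add (cg_add (cg_sub (cg_refl _)
          (cg_csmul _ (claimP R (mm+1) (j+1) (by omega))))
          (cg_csmul _ (cg_of_mem ?_))) (cg_refl _))
          (cg_csmul _ (claimP R mm (j+2) (by omega)))
        · exact Itrail _ j
      · rw [Srec mm (j+1), show j+1+1 = j+2 from rfl]
        module

lemma cg_sum {ι : Type*} (s : Finset ι) (f g : ι → A)
    (hfg : ∀ i ∈ s, Cg xp (f i) (g i)) :
    Cg xp (∑ i ∈ s, f i) (∑ i ∈ s, g i) := by
  rw [Cg, ← Finset.sum_sub_distrib]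
  exact Submodule.sum_mem _ hfg

lemma main (R : Rel xp xm h) (n : ℕ) (hn : 1 ≤ n) :
    Cg xp (((n : ℕ) : ℂ) • aa xp xm n) (SS xp xm h (n-1) 1) := by
  match n, hn with
  | 1, _ =>
      have dec : ((1 : ℕ) : ℂ) • aa xp xm 1 = dF xm 1 * xp 0 + h 1 := by
        rw [aa, dE_one, dPF1 R 0]
        norm_num
      refine cg_trans (cg_of_eq dec) (cg_trans (y := 0 + h 1)
        (cg_add (cg_of_mem (Itrail _ 0)) (cg_refl _)) (cg_of_eq ?_))
      rw [SS_zero, aa_zero, one_mul, zero_add]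
  | (m+2), _ =>
      have dec : ((m+2 : ℕ) : ℂ) • aa xp xm (m+2)
          = dE xp (m+1) * dF xm (m+2) * xp 0 + aa xp xm (m+1) * h 1
            - dE xp (m+1) * dF xm m * xm 2 := by
        rw [aa, ← smul_mul_assoc, show ((m+2:ℕ):ℂ) = ((m+1+1:ℕ):ℂ) from rfl,
          show dE xp (m+2) = dE xp (m+1+1) from rfl, dE_succ (m+1), mul_assoc,
          dPF R 0 m]
        simp only [zero_add, aa, mul_add, mul_sub, mul_assoc]
      refine cg_trans (cg_of_eq dec) (cg_trans
        (y := 0 + aa xp xm (m+1) * h 1 - SS xp xm h m 2)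
        (cg_sub (cg_add (cg_of_mem (Itrail _ 0)) (cg_refl _))
          (claimP R m 2 (by omega))) (cg_of_eq ?_))
      rw [show m+2-1 = m+1 from rfl, Srec m 1, show (1:ℕ)+1 = 2 from rfl, zero_add]

theorem stmt11' (R : Rel xp xm h) (n : ℕ) (hn : 1 ≤ n) :
    aa xp xm n - (n : ℂ)⁻¹ • ∑ k ∈ Finset.Icc 1 n, (-1 : ℂ) ^ (k - 1) •
      (h k * aa xp xm (n - k)) ∈ idl xp := by
  have hne : ((n : ℕ) : ℂ) ≠ 0 := Nat.cast_ne_zero.mpr (by omega)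
  have key := main R n hn
  have step2 : Cg xp (SS xp xm h (n-1) 1)
      (∑ k ∈ Finset.Icc 1 n, (-1 : ℂ) ^ (k - 1) • (h k * aa xp xm (n - k))) := by
    have hIcc : Finset.Icc 1 n = Finset.Ico 1 (n+1) := by
      rw [Finset.Ico_add_one_right_eq_Icc]
    rw [hIcc, Finset.sum_Ico_eq_sum_range]
    have hr : n + 1 - 1 = (n-1) + 1 := by omega
    rw [hr, SS]
    refine cg_sum _ _ _ ?_
    intro i _
    have g1 : 1 + i - 1 = i := by omega
    have g2 : n - (1 + i) = n - 1 - i := by omega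
    rw [g1, g2]
    exact cg_csmul _ (cg_symm (hcomm R (1+i) (n-1-i)))
  have hD : ((n:ℕ):ℂ) • aa xp xm n
      - (∑ k ∈ Finset.Icc 1 n, (-1 : ℂ) ^ (k - 1) • (h k * aa xp xm (n - k)))
      ∈ idl xp := cg_trans key step2
  have := Icsmul (((n:ℕ):ℂ))⁻¹ hD
  rwa [smul_sub, smul_smul, inv_mul_cancel₀ hne, one_smul] at this
end Stmt11

/-- In `U(B₀)` (realized as a ℂ-algebra `A` with generators `x_k^+, h_k`
(`k ≥ 0`) and `x_k^-` (`k ≥ 1`) satisfying the Borel loop relations), for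
every `n ≥ 1`:
`(x_0^+)^{(n)} (x_1^-)^{(n)} ≡ (1/n) Σ_{k=1}^n (-1)^{k-1} h_k (x_0^+)^{(n-k)} (x_1^-)^{(n-k)}`
modulo the left ideal `U(B₀)·B₀^+` generated by the `x_k^+`, where
`X^{(m)} = X^m / m!`. -/
theorem stmt11 {A : Type*} [Ring A] [Algebra ℂ A]
    (xp xm h : ℕ → A)
    (h_xp : ∀ j k, h j * xp k - xp k * h j = 2 • xp (j + k))
    (h_xm : ∀ j k, 1 ≤ k → h j * xm k - xm k * h j = -(2 • xm (j + k)))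
    (xp_xm : ∀ j k, 1 ≤ k → xp j * xm k - xm k * xp j = h (j + k))
    (h_h : ∀ j k, h j * h k = h k * h j)
    (xp_xp : ∀ j k, xp j * xp k = xp k * xp j)
    (xm_xm : ∀ j k, 1 ≤ j → 1 ≤ k → xm j * xm k = xm k * xm j)
    (n : ℕ) (hn : 1 ≤ n) :
    (((n.factorial : ℂ))⁻¹ • (xp 0) ^ n) * (((n.factorial : ℂ))⁻¹ • (xm 1) ^ n)
      - (n : ℂ)⁻¹ • ∑ k ∈ Finset.Icc 1 n, (-1 : ℂ) ^ (k - 1) •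
          (h k * (((((n - k).factorial : ℂ))⁻¹ • (xp 0) ^ (n - k))
            * ((((n - k).factorial : ℂ))⁻¹ • (xm 1) ^ (n - k))))
      ∈ Submodule.span A {a | ∃ k, a = xp k} := by
  have R : Stmt11.Rel xp xm h := ⟨h_xp, h_xm, xp_xm, h_h, xp_xp, xm_xm⟩
  have main := Stmt11.stmt11' R n hn
  simp only [Stmt11.aa, Stmt11.dE, Stmt11.dF] at main
  exact main
end

section
/- Let Ψ be a highest weight vector of U(B₀) with x_1^- nilpotent of degree r, and let λ_j be the eigenvalues of (x_0^+)^{(j)}(x_1^-)^{(j)} on Ψ. Then the reduction relations hold: x_{r+1+m}^- Ψ = Σ_{k=1}^r (-1)^{r-k} λ_{r+1-k} x_{k+m}^- Ψ for all m ≥ 0, and the highest weight eigenvalues satisfy d_{r+1+m} = Σ_{k=1}^r (-1)^{r-k} λ_{r+1-k} d_{k+m} for all m ≥ 0. -/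
open scoped BigOperators

variable {V : Type*} [AddCommGroup V] [Module ℂ V]

/-!
Put `X(u) = ∑_p x_{p+1}^- (-u)^p`, `H(u) = ∑_p h_{p+1} (-u)^p`, and let `Λ(u)` be the scalar series
with `Λ' = D Λ`, `Λ(0) = 1`, where `D(u) = ∑_p d_{p+1} (-u)^p`. The loop relations give
`[x_0^+, X] = H` and `[H, X] = 2 X'`, while `x_0^+ Ψ = 0` and `H Ψ = D Ψ`; by induction on `L`,
`x_0^+ X^(L+1) Λ Ψ = (L+1) (X^L Λ)' Ψ`. Iterating this from `(x_1^-)^n Ψ = [u^0] X^n Λ Ψ` gives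
`(x_0^+)^j (x_1^-)^n Ψ = n!/(n-j)! · j! · [u^j] X^(n-j) Λ Ψ` for `j ≤ n`.
For `j = n` this identifies `λ_j` with `[u^j] Λ`. For `n = r + 1`, `j = r` the nilpotency of
`x_1^-` gives `[u^r] X Λ Ψ = 0`, which is the first relation for `m = 0`; applying `h_1` shifts
it to every `m`, and applying `x_0^+` turns it into the relation between the `d_k`.
-/

open PowerSeries Finset

namespace PowerSeries

variable {R : Type*} [Semiring R]

-- Mathlib's `PowerSeries.derivative` needs commutative coefficients.
noncomputable def formalDeriv (F : R⟦X⟧) : R⟦X⟧ :=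
  mk fun n => (n + 1) • coeff (n + 1) F

@[simp]
lemma coeff_formalDeriv (F : R⟦X⟧) (n : ℕ) :
    coeff n (formalDeriv F) = (n + 1) • coeff (n + 1) F :=
  coeff_mk _ _

@[simp]
lemma formalDeriv_one : formalDeriv (1 : R⟦X⟧) = 0 := by
  ext n
  simp [coeff_one]

lemma formalDeriv_mul (F G : R⟦X⟧) :
    formalDeriv (F * G) = formalDeriv F * G + F * formalDeriv G := by
  ext n
  have hsplit : (n + 1) • coeff (n + 1) (F * G) = ∑ p ∈ antidiagonal (n + 1),
      (p.1 • (coeff p.1 F * coeff p.2 G) + p.2 • (coeff p.1 F * coeff p.2 G)) := by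
    rw [coeff_mul, smul_sum]
    exact sum_congr rfl fun p hp => by rw [← add_smul, mem_antidiagonal.mp hp]
  rw [coeff_formalDeriv, hsplit, sum_add_distrib, Nat.sum_antidiagonal_succ,
    Nat.sum_antidiagonal_succ', map_add, coeff_mul, coeff_mul]
  simp only [zero_smul, zero_add, coeff_formalDeriv, smul_mul_assoc, mul_smul_comm]

lemma formalDeriv_pow_succ {F : R⟦X⟧} (h : Commute F (formalDeriv F)) (n : ℕ) :
    formalDeriv (F ^ (n + 1)) = (n + 1) • (formalDeriv F * F ^ n) := by
  induction n with
  | zero => simp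
  | succ n ih =>
    rw [pow_succ' F (n + 1), formalDeriv_mul, ih, mul_smul_comm, ← mul_assoc, h.eq, mul_assoc,
      ← pow_succ']
    module

lemma commute_of_commute_coeff {F G : R⟦X⟧} (h : ∀ i j, Commute (coeff i F) (coeff j G)) :
    Commute F G := by
  ext n
  rw [coeff_mul, coeff_mul,
    ← Nat.sum_antidiagonal_swap (f := fun p => coeff p.1 G * coeff p.2 F)]
  exact sum_congr rfl fun p _ => (h p.1 p.2).eq

end PowerSeries

noncomputable def evalAt (Ψ : V) : (Module.End ℂ V)⟦X⟧ →+ ℕ → V where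
  toFun F n := coeff n F Ψ
  map_zero' := by ext; simp
  map_add' F G := by ext; simp

lemma evalAt_apply (Ψ : V) (F : (Module.End ℂ V)⟦X⟧) (n : ℕ) :
    evalAt Ψ F n = coeff n F Ψ :=
  rfl

lemma evalAt_mul_congr {Ψ : V} (F : (Module.End ℂ V)⟦X⟧) {G G' : (Module.End ℂ V)⟦X⟧}
    (h : evalAt Ψ G = evalAt Ψ G') : evalAt Ψ (F * G) = evalAt Ψ (F * G') := by
  funext n
  simp only [evalAt_apply, coeff_mul, LinearMap.sum_apply, Module.End.mul_apply]
  exact sum_congr rfl fun p _ => by rw [← evalAt_apply Ψ G, h, evalAt_apply]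

/-- The coefficients of `Λ(u) = exp (∑_{k ≥ 1} (-1)^(k-1) d_k u^k / k)`. -/
noncomputable def lambdaSeq (d : ℕ → ℂ) : ℕ → ℂ
  | 0 => 1
  | j + 1 =>
      ((j : ℂ) + 1)⁻¹ * ∑ p ∈ (antidiagonal j).attach,
        (-1 : ℂ) ^ p.1.1 * d (p.1.1 + 1) * lambdaSeq d p.1.2
  decreasing_by
    have := Finset.HasAntidiagonal.antidiagonal.snd_le p.2
    omega

lemma lambdaSeq_zero (d : ℕ → ℂ) : lambdaSeq d 0 = 1 := by
  rw [lambdaSeq]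

lemma succ_mul_lambdaSeq_succ (d : ℕ → ℂ) (j : ℕ) :
    ((j : ℂ) + 1) * lambdaSeq d (j + 1)
      = ∑ p ∈ antidiagonal j, (-1 : ℂ) ^ p.1 * d (p.1 + 1) * lambdaSeq d p.2 := by
  rw [lambdaSeq, ← mul_assoc, mul_inv_cancel₀ (Nat.cast_add_one_ne_zero j), one_mul]
  exact sum_attach (antidiagonal j) fun p => (-1 : ℂ) ^ p.1 * d (p.1 + 1) * lambdaSeq d p.2

noncomputable def lambdaSeries (d : ℕ → ℂ) : (Module.End ℂ V)⟦X⟧ :=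
  mk fun j => lambdaSeq d j • 1

lemma evalAt_lambdaSeries (d : ℕ → ℂ) (Ψ : V) (n : ℕ) :
    evalAt Ψ (lambdaSeries d) n = lambdaSeq d n • Ψ := by
  simp [evalAt_apply, lambdaSeries]

namespace BorelRep

variable (B : BorelRep V)

lemma xp_mul_xm (j : ℕ) {k : ℕ} (hk : 1 ≤ k) :
    B.xp j * B.xm k = B.xm k * B.xp j + B.h (j + k) := by
  rw [← B.xp_xm j k hk, Ring.lie_def]
  abel

lemma h_mul_xm (j : ℕ) {k : ℕ} (hk : 1 ≤ k) :
    B.h j * B.xm k = B.xm k * B.h j - 2 • B.xm (j + k) := by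
  rw [eq_sub_iff_add_eq, ← neg_eq_iff_eq_neg.mpr (B.h_xm j k hk), Ring.lie_def]
  abel

lemma commute_xm {j k : ℕ} (hj : 1 ≤ j) (hk : 1 ≤ k) : Commute (B.xm j) (B.xm k) :=
  sub_eq_zero.mp (by rw [← Ring.lie_def, B.xm_xm j k hj hk])

noncomputable def xmSeries : (Module.End ℂ V)⟦X⟧ :=
  PowerSeries.mk fun p => (-1 : ℂ) ^ p • B.xm (p + 1)

noncomputable def hSeries : (Module.End ℂ V)⟦X⟧ :=
  PowerSeries.mk fun p => (-1 : ℂ) ^ p • B.h (p + 1)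

lemma C_xp_zero_mul_xmSeries :
    C (B.xp 0) * B.xmSeries = B.xmSeries * C (B.xp 0) + B.hSeries := by
  refine PowerSeries.ext fun n => ?_
  simp only [xmSeries, hSeries, map_add, coeff_C_mul, coeff_mul_C, coeff_mk, mul_smul_comm,
    smul_mul_assoc, B.xp_mul_xm 0 (Nat.le_add_left 1 n), zero_add, smul_add]

lemma hSeries_mul_xmSeries :
    B.hSeries * B.xmSeries = B.xmSeries * B.hSeries + 2 • formalDeriv B.xmSeries := by
  refine PowerSeries.ext fun n => ?_
  have hterm : ∀ p ∈ antidiagonal n, coeff p.1 B.hSeries * coeff p.2 B.xmSeries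
      = coeff p.2 B.xmSeries * coeff p.1 B.hSeries - (-1 : ℂ) ^ n • 2 • B.xm (n + 2) := by
    intro p hp
    rw [HasAntidiagonal.mem_antidiagonal] at hp
    simp only [xmSeries, hSeries, coeff_mk, mul_smul_comm, smul_mul_assoc, smul_smul,
      B.h_mul_xm _ (Nat.le_add_left 1 p.2), ← pow_add, smul_sub]
    rw [show p.1 + 1 + (p.2 + 1) = n + 2 by omega, show p.2 + p.1 = n by omega,
      show p.1 + p.2 = n by omega]
  rw [coeff_mul, sum_congr rfl hterm, sum_sub_distrib, sum_const, Nat.card_antidiagonal, map_add,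
    coeff_mul,
    ← Nat.sum_antidiagonal_swap (f := fun p => coeff p.1 B.xmSeries * coeff p.2 B.hSeries)]
  simp only [Prod.fst_swap, Prod.snd_swap, map_nsmul, coeff_formalDeriv, xmSeries, coeff_mk,
    pow_succ]
  module

lemma commute_xmSeries_formalDeriv : Commute B.xmSeries (formalDeriv B.xmSeries) :=
  commute_of_commute_coeff fun i j => by
    simp only [xmSeries, coeff_formalDeriv, coeff_mk]
    exact (((B.commute_xm (Nat.le_add_left 1 i) (Nat.le_add_left 1 (j + 1))).smul_left _).smul_right
      _).smul_right _

variable {Ψ : V} (d : ℕ → ℂ)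

lemma evalAt_C_xp_zero_mul_lambdaSeries (hxp : B.xp 0 Ψ = 0) :
    evalAt Ψ (C (B.xp 0) * lambdaSeries d) = 0 := by
  funext n
  simp [evalAt_apply, coeff_C_mul, lambdaSeries, hxp]

lemma evalAt_hSeries_mul_lambdaSeries (hh : ∀ k, B.h k Ψ = d k • Ψ) :
    evalAt Ψ (B.hSeries * lambdaSeries d) = evalAt Ψ (formalDeriv (lambdaSeries d)) := by
  funext n
  simp only [evalAt_apply, coeff_mul, coeff_formalDeriv, LinearMap.sum_apply,
    Module.End.mul_apply, hSeries, lambdaSeries, coeff_mk, LinearMap.smul_apply,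
    Module.End.one_apply, map_smul, hh, smul_smul, ← sum_smul]
  rw [← Nat.cast_smul_eq_nsmul ℂ, smul_smul]
  push_cast
  rw [succ_mul_lambdaSeq_succ]
  exact congrArg (· • Ψ) (sum_congr rfl fun p _ => by ring)

variable {d}

lemma evalAt_hSeries_mul_xmSeries_pow (hh : ∀ k, B.h k Ψ = d k • Ψ) (L : ℕ) :
    evalAt Ψ (B.hSeries * (B.xmSeries ^ L * lambdaSeries d))
      = evalAt Ψ (formalDeriv (B.xmSeries ^ L * lambdaSeries d)
          + formalDeriv (B.xmSeries ^ L) * lambdaSeries d) := by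
  induction L with
  | zero => simp [B.evalAt_hSeries_mul_lambdaSeries d hh]
  | succ L ih =>
    set Y := B.xmSeries ^ L * lambdaSeries d
    have hcomm : B.hSeries * (B.xmSeries * Y)
        = B.xmSeries * (B.hSeries * Y) + 2 • (formalDeriv B.xmSeries * Y) := by
      rw [← mul_assoc, hSeries_mul_xmSeries, add_mul, mul_assoc, smul_mul_assoc]
    rw [pow_succ', mul_assoc, hcomm, map_add, evalAt_mul_congr _ ih, ← map_add,
      formalDeriv_mul B.xmSeries Y, formalDeriv_mul B.xmSeries (B.xmSeries ^ L)]
    congr 1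
    simp only [Y, mul_add, add_mul, mul_assoc, two_nsmul]
    abel

lemma evalAt_C_xp_zero_mul_xmSeries_pow_succ (hxp : B.xp 0 Ψ = 0)
    (hh : ∀ k, B.h k Ψ = d k • Ψ) (L : ℕ) :
    evalAt Ψ (C (B.xp 0) * (B.xmSeries ^ (L + 1) * lambdaSeries d))
      = (L + 1) • evalAt Ψ (formalDeriv (B.xmSeries ^ L * lambdaSeries d)) := by
  have hstep : ∀ Y, C (B.xp 0) * (B.xmSeries * Y)
      = B.xmSeries * (C (B.xp 0) * Y) + B.hSeries * Y := fun Y => by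
    rw [← mul_assoc, C_xp_zero_mul_xmSeries, add_mul, mul_assoc]
  induction L with
  | zero =>
    rw [pow_one, hstep, map_add,
      evalAt_mul_congr _ ((B.evalAt_C_xp_zero_mul_lambdaSeries d hxp).trans (map_zero _).symm),
      B.evalAt_hSeries_mul_lambdaSeries d hh]
    simp
  | succ L ih =>
    rw [pow_succ' _ (L + 1), mul_assoc, hstep, map_add,
      evalAt_mul_congr _ (ih.trans (map_nsmul _ _ _).symm), B.evalAt_hSeries_mul_xmSeries_pow hh,
      ← map_nsmul, ← map_add]
    congr 1
    rw [formalDeriv_pow_succ B.commute_xmSeries_formalDeriv, pow_succ' _ L, mul_assoc,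
      formalDeriv_mul B.xmSeries]
    simp only [mul_smul_comm, smul_mul_assoc, mul_assoc]
    module

lemma xp_zero_pow_xm_one_pow (hxp : B.xp 0 Ψ = 0) (hh : ∀ k, B.h k Ψ = d k • Ψ)
    {n j : ℕ} (hj : j ≤ n) :
    (B.xp 0 ^ j) ((B.xm 1 ^ n) Ψ)
      = (n.descFactorial j * j.factorial) • evalAt Ψ (B.xmSeries ^ (n - j) * lambdaSeries d) j := by
  induction j with
  | zero =>
    simp [evalAt_apply, coeff_zero_eq_constantCoeff_apply, xmSeries, lambdaSeries,
      lambdaSeq_zero]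
  | succ j ih =>
    obtain ⟨L, hL⟩ : ∃ L, n - j = L + 1 := ⟨n - (j + 1), by omega⟩
    have hxp_evalAt : ∀ F, B.xp 0 (evalAt Ψ F j) = evalAt Ψ (C (B.xp 0) * F) j := fun F => by
      rw [evalAt_apply, evalAt_apply, coeff_C_mul, Module.End.mul_apply]
    rw [pow_succ', Module.End.mul_apply, ih (by omega), map_nsmul, hL, hxp_evalAt,
      B.evalAt_C_xp_zero_mul_xmSeries_pow_succ hxp hh, Pi.smul_apply, evalAt_apply,
      coeff_formalDeriv, LinearMap.smul_apply, ← evalAt_apply, smul_smul, smul_smul,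
      show n - (j + 1) = L by omega, Nat.descFactorial_succ, hL, Nat.factorial_succ]
    congr 1
    ring

lemma xp_zero_pow_mul_xm_one_pow_self (hxp : B.xp 0 Ψ = 0) (hh : ∀ k, B.h k Ψ = d k • Ψ)
    (j : ℕ) : (B.xp 0 ^ j * B.xm 1 ^ j) Ψ = ((j.factorial : ℂ) ^ 2 * lambdaSeq d j) • Ψ := by
  rw [Module.End.mul_apply, B.xp_zero_pow_xm_one_pow hxp hh le_rfl, Nat.sub_self, pow_zero,
    one_mul, evalAt_lambdaSeries, Nat.descFactorial_self, ← Nat.cast_smul_eq_nsmul ℂ, smul_smul]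
  push_cast
  ring_nf

lemma sum_antidiagonal_smul_xm_eq_zero (hxp : B.xp 0 Ψ = 0) (hh : ∀ k, B.h k Ψ = d k • Ψ)
    {r : ℕ} (hnil : (B.xm 1 ^ (r + 1)) Ψ = 0) :
    ∑ p ∈ antidiagonal r, ((-1 : ℂ) ^ p.1 * lambdaSeq d p.2) • B.xm (p.1 + 1) Ψ = 0 := by
  have h := B.xp_zero_pow_xm_one_pow hxp hh (Nat.le_add_right r 1)
  rw [hnil, map_zero, Nat.add_sub_cancel_left, pow_one, eq_comm, ← Nat.cast_smul_eq_nsmul ℂ,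
    smul_eq_zero] at h
  have hcoeff : (((r + 1).descFactorial r * r.factorial : ℕ) : ℂ) ≠ 0 := Nat.cast_ne_zero.mpr <|
    Nat.mul_ne_zero (by rw [Ne, Nat.descFactorial_eq_zero_iff_lt]; omega) r.factorial_ne_zero
  have h2 := h.resolve_left hcoeff
  rw [evalAt_apply, coeff_mul, LinearMap.sum_apply] at h2
  rw [← h2]
  refine sum_congr rfl fun p _ => ?_
  simp [xmSeries, lambdaSeries, mul_comm, smul_smul]

lemma sum_smul_xm_succ_eq_zero {a : ℂ} (hh : B.h 1 Ψ = a • Ψ) {ι : Type*} (s : Finset ι)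
    (c : ι → ℂ) {f : ι → ℕ} (hf : ∀ i ∈ s, 1 ≤ f i)
    (h0 : ∑ i ∈ s, c i • B.xm (f i) Ψ = 0) : ∑ i ∈ s, c i • B.xm (f i + 1) Ψ = 0 := by
  have hterm : ∀ i ∈ s, c i • B.h 1 (B.xm (f i) Ψ)
      = a • c i • B.xm (f i) Ψ - 2 • c i • B.xm (f i + 1) Ψ := fun i hi => by
    rw [← Module.End.mul_apply, B.h_mul_xm 1 (hf i hi), LinearMap.sub_apply,
      Module.End.mul_apply, hh, map_smul, LinearMap.smul_apply, add_comm 1]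
    module
  have h1 := congrArg (B.h 1) h0
  rw [map_sum, map_zero] at h1
  simp only [map_smul] at h1
  rw [sum_congr rfl hterm, sum_sub_distrib, ← smul_sum, ← smul_sum, h0, smul_zero,
    zero_sub, neg_eq_zero, ← Nat.cast_smul_eq_nsmul ℂ] at h1
  exact (smul_eq_zero.mp h1).resolve_left (by norm_num)

lemma sum_smul_xm_add_eq_zero {a : ℂ} (hh : B.h 1 Ψ = a • Ψ) {ι : Type*} (s : Finset ι)
    (c : ι → ℂ) {f : ι → ℕ} (hf : ∀ i ∈ s, 1 ≤ f i)
    (h0 : ∑ i ∈ s, c i • B.xm (f i) Ψ = 0) (m : ℕ) :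
    ∑ i ∈ s, c i • B.xm (f i + m) Ψ = 0 := by
  induction m with
  | zero => exact h0
  | succ m ih =>
    exact B.sum_smul_xm_succ_eq_zero hh s c (f := fun i => f i + m)
      (fun i hi => le_add_right (hf i hi)) ih

lemma sum_mul_eq_zero_of_sum_smul_xm_eq_zero (hxp : B.xp 0 Ψ = 0) (hh : ∀ k, B.h k Ψ = d k • Ψ)
    (hΨ : Ψ ≠ 0) {ι : Type*} (s : Finset ι) (c : ι → ℂ) {f : ι → ℕ} (hf : ∀ i ∈ s, 1 ≤ f i)
    (h0 : ∑ i ∈ s, c i • B.xm (f i) Ψ = 0) : ∑ i ∈ s, c i * d (f i) = 0 := by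
  have hterm : ∀ i ∈ s, c i • B.xp 0 (B.xm (f i) Ψ) = (c i * d (f i)) • Ψ := fun i hi => by
    rw [← Module.End.mul_apply, B.xp_mul_xm 0 (hf i hi), LinearMap.add_apply,
      Module.End.mul_apply, hxp, map_zero, zero_add, zero_add, hh, smul_smul]
  have h1 := congrArg (B.xp 0) h0
  rw [map_sum, map_zero] at h1
  simp only [map_smul] at h1
  rw [sum_congr rfl hterm, ← sum_smul] at h1
  exact (smul_eq_zero.mp h1).resolve_right hΨ

end BorelRep

lemma eq_sum_Icc_of_sum_antidiagonal_eq_zero {M : Type*} [AddCommGroup M] [Module ℂ M]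
    {c : ℕ → ℂ} (hc : c 0 = 1) {y : ℕ → M} {r : ℕ}
    (h : ∑ p ∈ antidiagonal r, ((-1 : ℂ) ^ p.1 * c p.2) • y (p.1 + 1) = 0) :
    y (r + 1) = ∑ k ∈ Icc 1 r, ((-1 : ℂ) ^ (r - k) * c (r + 1 - k)) • y k := by
  rw [Nat.sum_antidiagonal_eq_sum_range_succ_mk, sum_range_succ, Nat.sub_self, hc, mul_one,
    add_eq_zero_iff_neg_eq] at h
  have hy : y (r + 1) = (-1 : ℂ) ^ r • ((-1 : ℂ) ^ r • y (r + 1)) := by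
    rw [smul_smul, ← pow_add, Even.neg_one_pow ⟨r, rfl⟩, one_smul]
  rw [hy, ← h, smul_neg, smul_sum, ← sum_neg_distrib, ← Ico_add_one_right_eq_Icc,
    sum_Ico_eq_sum_range, Nat.add_sub_cancel]
  refine sum_congr rfl fun k hk => ?_
  obtain ⟨t, rfl⟩ : ∃ t, r = t + (k + 1) := ⟨r - (k + 1), by rw [mem_range] at hk; omega⟩
  have hk2 : ((-1 : ℂ) ^ k) ^ 2 = 1 := by rw [← pow_mul, pow_mul', neg_one_sq, one_pow]
  rw [show t + (k + 1) - (1 + k) = t by omega, show t + (k + 1) + 1 - (1 + k) = t + 1 by omega,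
    show t + (k + 1) - k = t + 1 by omega, add_comm 1 k, smul_smul, ← neg_smul]
  congr 1
  linear_combination ((-1 : ℂ) ^ t * c (t + 1)) * hk2

/-- Reduction relations: if `Ψ` is a highest weight vector of `U(B₀)` with
`x_1^-` nilpotent of degree `r` and eigenvalues
`(x_0^+)^{(j)}(x_1^-)^{(j)} Ψ = λ_j Ψ`, then for all `m ≥ 0`
`x_{r+1+m}^- Ψ = Σ_{k=1}^r (-1)^{r-k} λ_{r+1-k} x_{k+m}^- Ψ` and
`d_{r+1+m} = Σ_{k=1}^r (-1)^{r-k} λ_{r+1-k} d_{k+m}`. -/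
theorem stmt12 (B : BorelRep V) (Ψ : V) (d : ℕ → ℂ)
    (hxpΨ : ∀ k, B.xp k Ψ = 0) (hhΨ : ∀ k, B.h k Ψ = d k • Ψ)
    (r : ℕ) (hnil : ((B.xm 1) ^ (r + 1)) Ψ = 0) (hnz : ((B.xm 1) ^ r) Ψ ≠ 0)
    (lam : ℕ → ℂ)
    (hlam : ∀ j, 1 ≤ j → j ≤ r → (((B.xp 0) ^ j) * ((B.xm 1) ^ j)) Ψ
      = (((j.factorial : ℂ)) ^ 2 * lam j) • Ψ) :
    (∀ m : ℕ, B.xm (r + 1 + m) Ψ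
      = ∑ k ∈ Finset.Icc 1 r,
          ((-1 : ℂ) ^ (r - k) * lam (r + 1 - k)) • B.xm (k + m) Ψ) ∧
    (∀ m : ℕ, d (r + 1 + m)
      = ∑ k ∈ Finset.Icc 1 r,
          (-1 : ℂ) ^ (r - k) * lam (r + 1 - k) * d (k + m)) := by
  have hΨ : Ψ ≠ 0 := fun h => hnz (by rw [h, map_zero])
  have hlambdaSeq : ∀ k ∈ Icc 1 r, lambdaSeq d (r + 1 - k) = lam (r + 1 - k) := fun k hk => by
    rw [mem_Icc] at hk
    have h := hlam (r + 1 - k) (by omega) (by omega)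
    rw [B.xp_zero_pow_mul_xm_one_pow_self (hxpΨ 0) hhΨ] at h
    exact mul_left_cancel₀ (pow_ne_zero 2 (Nat.cast_ne_zero.mpr (Nat.factorial_ne_zero _)))
      (smul_left_injective ℂ hΨ h)
  have hvanish (m : ℕ) : ∑ p ∈ antidiagonal r,
      ((-1 : ℂ) ^ p.1 * lambdaSeq d p.2) • B.xm (p.1 + 1 + m) Ψ = 0 :=
    B.sum_smul_xm_add_eq_zero (hhΨ 1) _ _ (fun p _ => Nat.le_add_left 1 p.1)
      (B.sum_antidiagonal_smul_xm_eq_zero (hxpΨ 0) hhΨ hnil) m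
  refine ⟨fun m => ?_, fun m => ?_⟩
  · rw [eq_sum_Icc_of_sum_antidiagonal_eq_zero (lambdaSeq_zero d)
      (y := fun k => B.xm (k + m) Ψ) (hvanish m)]
    exact sum_congr rfl fun k hk => by rw [hlambdaSeq k hk]
  · have h := B.sum_mul_eq_zero_of_sum_smul_xm_eq_zero (hxpΨ 0) hhΨ hΨ _ _
      (fun p _ => Nat.le_add_right_of_le (Nat.le_add_left 1 p.1)) (hvanish m)
    rw [eq_sum_Icc_of_sum_antidiagonal_eq_zero (lambdaSeq_zero d) (y := fun k => d (k + m)) h]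
    exact sum_congr rfl fun k hk => by rw [hlambdaSeq k hk, smul_eq_mul]
end

section
/- Suppose generators A_n of a representation of the Onsager algebra are given by A_m = 2 Σ_{j=1}^n (e_j^+ z_j^m + e_j^- z_j^{-m}) and G_k = Σ_{j=1}^n h_j (z_j^k - z_j^{-k}), where for each j the triple (e_j^±, h_j) satisfies sl₂ relations [h_j, e_k^±] = ±2 δ_{jk} e_j^±, [e_j^+, e_k^-] = δ_{jk} h_j, different j's commute, and z_1,...,z_n are nonzero complex numbers. Then A_m, G_ℓ satisfy the Onsager algebra relations [A_ℓ, A_m] = 4G_{ℓ-m}, [G_ℓ, A_m] = 2A_{m+ℓ} - 2A_{m-ℓ}, [G_ℓ, G_m] = 0, and the A_m satisfy a linear recurrence of order 2n with characteristic roots z_j, z_j^{-1}. -/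
open scoped BigOperators

/-!
Inside a single copy of `sl₂`, `e ⊗ tᵐ + f ⊗ t⁻ᵐ` and `h ⊗ (tᵏ - t⁻ᵏ)` span a copy of the
Onsager algebra in the loop algebra; evaluating at `t = z_j` and summing over the commuting copies
gives the relations, since all cross brackets vanish. Each `A_m` is a combination of the
exponentials `z_j ^ m` and `z_j⁻¹ ^ m`, so it satisfies the linear recurrence whose characteristic
polynomial is `∏ (X - z_j) (X - z_j⁻¹)`, with coefficients `(-1)ᵏ eₖ` by Vieta.
-/

open Finset

theorem prod_one_sub_mul_eq_sum_esymm {n : ℕ} (α : Fin n → ℂ) (x : ℂ) :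
    ∏ i, (1 - α i * x) = ∑ k ∈ range (n + 1), (-1) ^ k * esymm α k * x ^ k := by
  simp_rw [sub_eq_add_neg, neg_mul_eq_mul_neg, prod_one_add, sum_powerset, card_univ,
    Fintype.card_fin, esymm, mul_sum, sum_mul]
  refine sum_congr rfl fun k _ => sum_congr rfl fun t ht => ?_
  rw [← prod_mul_pow_card, (mem_powersetCard.1 ht).2, neg_pow]
  ring

theorem sum_esymm_mul_zpow_sub_eq_zero {n : ℕ} {α : Fin n → ℂ} {i : Fin n} (hi : α i ≠ 0)
    (m : ℤ) : ∑ k ∈ range (n + 1), (-1) ^ k * esymm α k * α i ^ (m - k) = 0 := by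
  have hk : ∀ k : ℕ, α i ^ (m - k) = α i ^ m * (α i)⁻¹ ^ k := fun k => by
    rw [zpow_sub₀ hi, zpow_natCast, div_eq_mul_inv, inv_pow]
  simp_rw [hk, mul_left_comm _ (α i ^ m), ← mul_sum]
  rw [← prod_one_sub_mul_eq_sum_esymm]
  exact mul_eq_zero_of_right _ (prod_eq_zero (mem_univ i) (by rw [mul_inv_cancel₀ hi, sub_self]))

theorem sum_esymm_smul_eq_zero_of_eq_sum_zpow_smul {M : Type*} [AddCommGroup M] [Module ℂ M]
    {n : ℕ} {α : Fin n → ℂ} (hα : ∀ i, α i ≠ 0) {S : ℤ → M} {v : Fin n → M}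
    (hS : ∀ m, S m = ∑ i, α i ^ m • v i) (m : ℤ) :
    ∑ k ∈ range (n + 1), ((-1) ^ k * esymm α k) • S (m - k) = 0 := by
  simp_rw [hS, smul_sum, smul_smul]
  rw [sum_comm]
  exact sum_eq_zero fun i _ => by rw [← sum_smul, sum_esymm_mul_zpow_sub_eq_zero (hα i), zero_smul]

theorem sum_lie_sum_eq_sum_lie_of_pairwise {L M ι : Type*} [LieRing L] [AddCommGroup M]
    [LieRingModule L M] {s : Finset ι} {f : ι → L} {g : ι → M}
    (h : ∀ i ∈ s, ∀ j ∈ s, i ≠ j → ⁅f i, g j⁆ = 0) :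
    ⁅∑ i ∈ s, f i, ∑ j ∈ s, g j⁆ = ∑ i ∈ s, ⁅f i, g i⁆ := by
  rw [sum_lie_sum]
  exact sum_congr rfl fun i hi => sum_eq_single_of_mem i hi fun j hj hji => h i hi j hj hji.symm

section Loop

variable {K L : Type*} [Field K] [LieRing L] [LieAlgebra K L]

/-- `e ⊗ tᵐ + f ⊗ t⁻ᵐ` of the loop algebra, evaluated at `t = x`. -/
def loopA (x : K) (e f : L) (m : ℤ) : L := x ^ m • e + x ^ (-m) • f

/-- `h ⊗ (tᵏ - t⁻ᵏ)` of the loop algebra, evaluated at `t = x`. -/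
def loopG (x : K) (h : L) (k : ℤ) : L := (x ^ k - x ^ (-k)) • h

theorem lie_loopA_loopA {x : K} (hx : x ≠ 0) (e f : L) (l m : ℤ) :
    ⁅loopA x e f l, loopA x e f m⁆ = loopG x ⁅e, f⁆ (l - m) := by
  have h₁ : x ^ (l - m) = x ^ l * x ^ (-m) := by rw [← zpow_add₀ hx, sub_eq_add_neg]
  have h₂ : x ^ (-(l - m)) = x ^ (-l) * x ^ m := by rw [← zpow_add₀ hx]; ring_nf
  simp only [loopA, loopG, lie_add, add_lie, lie_smul, smul_lie, lie_self, ← lie_skew f e, h₁, h₂]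
  module

theorem lie_loopG_loopA {x : K} (hx : x ≠ 0) {h e f : L} (he : ⁅h, e⁆ = 2 • e)
    (hf : ⁅h, f⁆ = -(2 • f)) (l m : ℤ) :
    ⁅loopG x h l, loopA x e f m⁆ = 2 • loopA x e f (m + l) - 2 • loopA x e f (m - l) := by
  have h₁ : x ^ (m + l) = x ^ l * x ^ m := by rw [← zpow_add₀ hx, add_comm]
  have h₂ : x ^ (m - l) = x ^ (-l) * x ^ m := by rw [← zpow_add₀ hx]; ring_nf
  have h₃ : x ^ (-(m + l)) = x ^ (-l) * x ^ (-m) := by rw [← zpow_add₀ hx]; ring_nf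
  have h₄ : x ^ (-(m - l)) = x ^ l * x ^ (-m) := by rw [← zpow_add₀ hx]; ring_nf
  simp only [loopA, loopG, lie_add, lie_smul, smul_lie, he, hf, h₁, h₂, h₃, h₄]
  module

theorem lie_loopA_loopA_eq_zero (x y : K) {e f e' f' : L} (hee : ⁅e, e'⁆ = 0) (hef : ⁅e, f'⁆ = 0)
    (hfe : ⁅f, e'⁆ = 0) (hff : ⁅f, f'⁆ = 0) (l m : ℤ) :
    ⁅loopA x e f l, loopA y e' f' m⁆ = 0 := by
  simp [loopA, hee, hef, hfe, hff]

theorem lie_loopG_loopA_eq_zero (x y : K) {h e f : L} (he : ⁅h, e⁆ = 0) (hf : ⁅h, f⁆ = 0)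
    (l m : ℤ) : ⁅loopG x h l, loopA y e f m⁆ = 0 := by
  simp [loopG, loopA, he, hf]

theorem lie_loopG_loopG_eq_zero (x y : K) {h h' : L} (hh : ⁅h, h'⁆ = 0) (l m : ℤ) :
    ⁅loopG x h l, loopG y h' m⁆ = 0 := by
  simp [loopG, hh]

end Loop

section Davies

variable {K L ι : Type*} [Field K] [LieRing L] [LieAlgebra K L] [Fintype ι]
  {z : ι → K} {ep em hh : ι → L}

variable (z ep em) in
def daviesA (m : ℤ) : L := 2 • ∑ j, loopA (z j) (ep j) (em j) m

variable (z hh) in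
def daviesG (k : ℤ) : L := ∑ j, loopG (z j) (hh j) k

theorem lie_daviesA_daviesA [DecidableEq ι] (hz : ∀ j, z j ≠ 0)
    (ep_em : ∀ j k, ⁅ep j, em k⁆ = if j = k then hh j else 0)
    (ep_ep : ∀ j k, j ≠ k → ⁅ep j, ep k⁆ = 0) (em_em : ∀ j k, j ≠ k → ⁅em j, em k⁆ = 0)
    (l m : ℤ) : ⁅daviesA z ep em l, daviesA z ep em m⁆ = 4 • daviesG z hh (l - m) := by
  have em_ep : ∀ j k, j ≠ k → ⁅em j, ep k⁆ = 0 := fun j k hjk => by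
    rw [← lie_skew, ep_em, if_neg hjk.symm, neg_zero]
  rw [daviesA, daviesA, nsmul_lie, lie_nsmul, smul_smul, sum_lie_sum_eq_sum_lie_of_pairwise]
  · simp [daviesG, lie_loopA_loopA (hz _), ep_em]
  · intro j _ k _ hjk
    exact lie_loopA_loopA_eq_zero _ _ (ep_ep j k hjk) (by simp [ep_em, hjk]) (em_ep j k hjk)
      (em_em j k hjk) l m

theorem lie_daviesG_daviesA [DecidableEq ι] (hz : ∀ j, z j ≠ 0)
    (h_ep : ∀ j k, ⁅hh j, ep k⁆ = if j = k then 2 • ep k else 0)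
    (h_em : ∀ j k, ⁅hh j, em k⁆ = if j = k then -(2 • em k) else 0) (l m : ℤ) :
    ⁅daviesG z hh l, daviesA z ep em m⁆ =
      2 • daviesA z ep em (m + l) - 2 • daviesA z ep em (m - l) := by
  rw [daviesG, daviesA, lie_nsmul, sum_lie_sum_eq_sum_lie_of_pairwise]
  · simp only [daviesA, smul_sum, ← sum_sub_distrib]
    refine sum_congr rfl fun j _ => ?_
    rw [lie_loopG_loopA (hz j) (by simp [h_ep]) (by simp [h_em]), smul_sub]
  · intro j _ k _ hjk
    exact lie_loopG_loopA_eq_zero _ _ (by simp [h_ep, hjk]) (by simp [h_em, hjk]) l m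

theorem lie_daviesG_daviesG (h_h : ∀ j k, ⁅hh j, hh k⁆ = 0) (l m : ℤ) :
    ⁅daviesG z hh l, daviesG z hh m⁆ = 0 := by
  simp [daviesG, sum_lie_sum, lie_loopG_loopG_eq_zero, h_h]

theorem daviesA_eq_sum_append {n : ℕ} (z : Fin n → K) (ep em : Fin n → L) (m : ℤ) :
    daviesA z ep em m = ∑ i, Fin.append z (fun j => (z j)⁻¹) i ^ m • (2 • Fin.append ep em i) := by
  rw [daviesA, Fin.sum_univ_add]
  simp only [Fin.append_left, Fin.append_right, loopA, inv_zpow, ← zpow_neg, smul_sum,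
    sum_add_distrib, smul_add, smul_comm _ (2 : ℕ)]

end Davies

/-- Davies' realization: given `n` commuting copies `(e_j^±, h_j)` of `sl₂`
acting on a vector space and nonzero numbers `z_1, …, z_n`, the operators
`A_m = 2 Σ_j (e_j^+ z_j^m + e_j^- z_j^{-m})` and
`G_k = Σ_j h_j (z_j^k - z_j^{-k})` satisfy the Onsager algebra relations
`[A_ℓ, A_m] = 4 G_{ℓ-m}`, `[G_ℓ, A_m] = 2 A_{m+ℓ} - 2 A_{m-ℓ}`,
`[G_ℓ, G_m] = 0`, and the `A_m` satisfy a linear recurrence of order `2n`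
with characteristic roots `z_j, z_j^{-1}`. -/
theorem stmt18 {V : Type*} [AddCommGroup V] [Module ℂ V] (n : ℕ)
    (ep em hh : Fin n → Module.End ℂ V)
    (h_ep : ∀ j k, ⁅hh j, ep k⁆ = if j = k then 2 • ep k else 0)
    (h_em : ∀ j k, ⁅hh j, em k⁆ = if j = k then -(2 • em k) else 0)
    (ep_em : ∀ j k, ⁅ep j, em k⁆ = if j = k then hh j else 0)
    (h_h : ∀ j k, ⁅hh j, hh k⁆ = 0)
    (ep_ep : ∀ j k, j ≠ k → ⁅ep j, ep k⁆ = 0)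
    (em_em : ∀ j k, j ≠ k → ⁅em j, em k⁆ = 0)
    (z : Fin n → ℂ) (hz : ∀ j, z j ≠ 0)
    (A : ℤ → Module.End ℂ V) (G : ℤ → Module.End ℂ V)
    (hA : ∀ m : ℤ, A m = 2 • ∑ j, ((z j ^ m) • ep j + (z j ^ (-m)) • em j))
    (hG : ∀ k : ℤ, G k = ∑ j, (z j ^ k - z j ^ (-k)) • hh j) :
    (∀ l m : ℤ, ⁅A l, A m⁆ = 4 • G (l - m)) ∧
    (∀ l m : ℤ, ⁅G l, A m⁆ = 2 • A (m + l) - 2 • A (m - l)) ∧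
    (∀ l m : ℤ, ⁅G l, G m⁆ = 0) ∧
    (∀ m : ℤ, ∑ k ∈ Finset.range (2 * n + 1),
      ((-1 : ℂ) ^ k * esymm (Fin.append z (fun j => (z j)⁻¹)) k) • A (m - k)
        = 0) := by
  -- the bracket of the statement is the commutator, a Lie ring structure only by this non-instance
  let _ : LieRing (Module.End ℂ V) := LieRing.ofAssociativeRing
  obtain rfl : A = daviesA z ep em := funext hA
  obtain rfl : G = daviesG z hh := funext hG
  have hα : ∀ i, Fin.append z (fun j => (z j)⁻¹) i ≠ 0 := fun i => by
    refine Fin.addCases (fun j => ?_) (fun j => ?_) i <;>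
      simp only [Fin.append_left, Fin.append_right]
    exacts [hz j, inv_ne_zero (hz j)]
  refine ⟨lie_daviesA_daviesA hz ep_em ep_ep em_em, lie_daviesG_daviesA hz h_ep h_em,
    lie_daviesG_daviesG h_h, fun m => ?_⟩
  rw [two_mul]
  exact sum_esymm_smul_eq_zero_of_eq_sum_zpow_smul hα (daviesA_eq_sum_append z ep em) m
end

section
/- Let Ψ be a highest weight vector in a finite-dimensional representation of U(B₀) with nonzero distinct highest weight parameters a_1,...,a_s of multiplicities m_1,...,m_s (r = Σ m_j), and suppose Σ_{j=0}^s (-1)^{s-j} μ_{s-j} x_{j+1}^- Ψ = 0, where μ_k = e_k(a_1,...,a_s). Then the degree-1 sector of U(B₀)Ψ has dimension at most s; equivalently, the vectors x_1^- Ψ, ..., x_{s+1}^- Ψ are linearly dependent with the specific relation given by the elementary symmetric polynomials of the distinct parameters. -/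
open scoped BigOperators

variable {V : Type*} [AddCommGroup V] [Module ℂ V]

/-! ### Auxiliary material for `stmt19` -/

namespace Stmt19Aux

variable {V : Type*} [AddCommGroup V] [Module ℂ V]

lemma h_xm_apply (B : BorelRep V) (j k : ℕ) (hk : 1 ≤ k) (v : V) :
    B.h j (B.xm k v) = B.xm k (B.h j v) - (2:ℂ) • B.xm (j + k) v := by
  have H := B.h_xm j k hk
  rw [Ring.lie_def] at H
  have h2 := DFunLike.congr_fun H v
  simp only [LinearMap.sub_apply, Module.End.mul_apply, LinearMap.neg_apply,
    LinearMap.smul_apply] at h2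
  rw [show ((2:ℕ) • B.xm (j+k) v) = (2:ℂ) • B.xm (j+k) v by rw [two_nsmul, two_smul]] at h2
  rw [sub_eq_iff_eq_add] at h2
  rw [h2]; abel

lemma xp_xm_apply (B : BorelRep V) (j k : ℕ) (hk : 1 ≤ k) (v : V) :
    B.xp j (B.xm k v) = B.xm k (B.xp j v) + B.h (j + k) v := by
  have H := B.xp_xm j k hk
  rw [Ring.lie_def] at H
  have h2 := DFunLike.congr_fun H v
  simp only [LinearMap.sub_apply, Module.End.mul_apply] at h2
  rw [sub_eq_iff_eq_add] at h2
  rw [h2]; abel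

/-- The span of all products of `n` lowering operators applied to `Ψ`. -/
def Tn (B : BorelRep V) (Ψ : V) (n : ℕ) : Submodule ℂ V :=
  Submodule.span ℂ {v | ∃ l : List ℕ, l.length = n ∧ (∀ k ∈ l, 1 ≤ k) ∧
    v = (l.map B.xm).prod Ψ}

lemma prod_mem_Tn (B : BorelRep V) (Ψ : V) {l : List ℕ} (hl : ∀ k ∈ l, 1 ≤ k) :
    (l.map B.xm).prod Ψ ∈ Tn B Ψ l.length :=
  Submodule.subset_span ⟨l, rfl, hl, rfl⟩

lemma psi_mem_Tn (B : BorelRep V) (Ψ : V) : Ψ ∈ Tn B Ψ 0 := by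
  have := prod_mem_Tn B Ψ (l := []) (by simp)
  simpa using this

lemma prod_cons (B : BorelRep V) (Ψ : V) (k : ℕ) (l : List ℕ) :
    ((k :: l).map B.xm).prod Ψ = B.xm k ((l.map B.xm).prod Ψ) := by
  simp [Module.End.mul_apply]

lemma xm_mem_Tn (B : BorelRep V) (Ψ : V) {k : ℕ} (hk : 1 ≤ k) {n : ℕ} {v : V}
    (hv : v ∈ Tn B Ψ n) : B.xm k v ∈ Tn B Ψ (n + 1) := by
  induction hv using Submodule.span_induction with
  | mem x hx =>
    obtain ⟨l, hlen, hpos, rfl⟩ := hx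
    rw [← prod_cons]
    refine Submodule.subset_span ⟨k :: l, by simp [hlen], ?_, rfl⟩
    intro k' hk'
    rcases List.mem_cons.mp hk' with h | h
    · exact h ▸ hk
    · exact hpos k' h
  | zero => simp
  | add x y _ _ hx hy => rw [map_add]; exact add_mem hx hy
  | smul c x _ hx => rw [map_smul]; exact Submodule.smul_mem _ _ hx

section WithHW

variable (B : BorelRep V) (Ψ : V) (d : ℕ → ℂ)
variable (hxpΨ : ∀ k, B.xp k Ψ = 0) (hhΨ : ∀ k, B.h k Ψ = d k • Ψ)

include hhΨ in
lemma h_prod (m : ℕ) : ∀ l : List ℕ, (∀ k ∈ l, 1 ≤ k) →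
    B.h m ((l.map B.xm).prod Ψ) ∈ Tn B Ψ l.length := by
  intro l
  induction l with
  | nil =>
    intro _
    simp only [List.map_nil, List.prod_nil, Module.End.one_apply, List.length_nil]
    rw [hhΨ]
    exact Submodule.smul_mem _ _ (psi_mem_Tn B Ψ)
  | cons k l ih =>
    intro hl
    have hk : 1 ≤ k := hl k (by simp)
    have hl' : ∀ k' ∈ l, 1 ≤ k' := fun k' h => hl k' (List.mem_cons_of_mem _ h)
    rw [prod_cons, h_xm_apply B m k hk]
    exact sub_mem (xm_mem_Tn B Ψ hk (ih hl'))
      (Submodule.smul_mem _ _ (xm_mem_Tn B Ψ (by omega) (prod_mem_Tn B Ψ hl')))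

include hhΨ in
lemma h_mem_Tn (m : ℕ) {n : ℕ} {v : V} (hv : v ∈ Tn B Ψ n) :
    B.h m v ∈ Tn B Ψ n := by
  induction hv using Submodule.span_induction with
  | mem x hx =>
    obtain ⟨l, hlen, hpos, rfl⟩ := hx
    exact hlen ▸ h_prod B Ψ d hhΨ m l hpos
  | zero => simp
  | add x y _ _ hx hy => rw [map_add]; exact add_mem hx hy
  | smul c x _ hx => rw [map_smul]; exact Submodule.smul_mem _ _ hx

include hxpΨ hhΨ in
lemma xp_prod (m : ℕ) : ∀ l : List ℕ, (∀ k ∈ l, 1 ≤ k) →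
    B.xp m ((l.map B.xm).prod Ψ) ∈ Tn B Ψ (l.length - 1) := by
  intro l
  induction l with
  | nil =>
    intro _
    simp only [List.map_nil, List.prod_nil, Module.End.one_apply, List.length_nil]
    rw [hxpΨ]
    exact zero_mem _
  | cons k l ih =>
    intro hl
    have hk : 1 ≤ k := hl k (by simp)
    have hl' : ∀ k' ∈ l, 1 ≤ k' := fun k' h => hl k' (List.mem_cons_of_mem _ h)
    rw [prod_cons, xp_xm_apply B m k hk]
    have hh : B.h (m + k) ((l.map B.xm).prod Ψ) ∈ Tn B Ψ l.length :=
      h_prod B Ψ d hhΨ (m + k) l hl'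
    have hxp := ih hl'
    rcases l with _ | ⟨k', l'⟩
    · simp only [List.map_nil, List.prod_nil, Module.End.one_apply] at hxp hh ⊢
      rw [hxpΨ, map_zero, zero_add]
      simpa using hh
    · simp only [List.length_cons, Nat.add_sub_cancel] at hxp ⊢
      exact add_mem (xm_mem_Tn B Ψ hk hxp) hh

include hxpΨ hhΨ in
lemma xp_mem_Tn (m : ℕ) {n : ℕ} {v : V} (hv : v ∈ Tn B Ψ n) :
    B.xp m v ∈ Tn B Ψ (n - 1) := by
  induction hv using Submodule.span_induction with
  | mem x hx =>
    obtain ⟨l, hlen, hpos, rfl⟩ := hx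
    exact hlen ▸ xp_prod B Ψ d hxpΨ hhΨ m l hpos
  | zero => simp
  | add x y _ _ hx hy => rw [map_add]; exact add_mem hx hy
  | smul c x _ hx => rw [map_smul]; exact Submodule.smul_mem _ _ hx

include hhΨ in
lemma h0_prod : ∀ l : List ℕ, (∀ k ∈ l, 1 ≤ k) →
    B.h 0 ((l.map B.xm).prod Ψ) = (d 0 - 2 * (l.length : ℂ)) • (l.map B.xm).prod Ψ := by
  intro l
  induction l with
  | nil =>
    intro _
    simp only [List.map_nil, List.prod_nil, Module.End.one_apply, List.length_nil]
    rw [hhΨ]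
    norm_num
  | cons k l ih =>
    intro hl
    have hk : 1 ≤ k := hl k (by simp)
    have hl' : ∀ k' ∈ l, 1 ≤ k' := fun k' h => hl k' (List.mem_cons_of_mem _ h)
    rw [prod_cons, h_xm_apply B 0 k hk, ih hl', map_smul, Nat.zero_add, ← sub_smul]
    congr 1
    simp only [List.length_cons]
    push_cast
    ring

include hhΨ in
lemma Tn_le_eigenspace (n : ℕ) :
    Tn B Ψ n ≤ Module.End.eigenspace (B.h 0) (d 0 - 2 * (n : ℂ)) := by
  rw [Tn, Submodule.span_le]
  rintro v ⟨l, rfl, hpos, rfl⟩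
  exact Module.End.mem_eigenspace_iff.mpr (h0_prod B Ψ d hhΨ l hpos)

include hxpΨ hhΨ in
lemma word_mem : ∀ w : List (Module.End ℂ V),
    (∀ f ∈ w, (∃ k, f = B.xp k) ∨ (∃ k, 1 ≤ k ∧ f = B.xm k) ∨ (∃ k, f = B.h k)) →
    ∃ n, w.prod Ψ ∈ Tn B Ψ n := by
  intro w
  induction w with
  | nil => intro _; exact ⟨0, by simpa using psi_mem_Tn B Ψ⟩
  | cons f w ih =>
    intro hw
    obtain ⟨n, hn⟩ := ih (fun g hg => hw g (List.mem_cons_of_mem _ hg))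
    have hfw : (f :: w).prod Ψ = f (w.prod Ψ) := by
      simp [Module.End.mul_apply]
    rcases hw f (by simp) with ⟨k, rfl⟩ | ⟨k, hk, rfl⟩ | ⟨k, rfl⟩
    · exact ⟨n - 1, hfw ▸ xp_mem_Tn B Ψ d hxpΨ hhΨ k hn⟩
    · exact ⟨n + 1, hfw ▸ xm_mem_Tn B Ψ hk hn⟩
    · exact ⟨n, hfw ▸ h_mem_Tn B Ψ d hhΨ k hn⟩

include hxpΨ hhΨ in
lemma cyclic_le_iSup : cyclic B Ψ ≤ ⨆ n, Tn B Ψ n := by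
  rw [cyclic, Submodule.span_le]
  rintro v ⟨w, hw, rfl⟩
  obtain ⟨n, hn⟩ := word_mem B Ψ d hxpΨ hhΨ w hw
  exact Submodule.mem_iSup_of_mem n hn

end WithHW

variable (B : BorelRep V) (Ψ : V) (d : ℕ → ℂ) {s : ℕ} (a : Fin s → ℂ)

lemma rel_shift (hhΨ : ∀ k, B.h k Ψ = d k • Ψ)
    (hrel : ∑ j ∈ Finset.range (s + 1),
      ((-1 : ℂ) ^ (s - j) * esymm a (s - j)) • B.xm (j + 1) Ψ = 0) :
    ∀ m : ℕ, ∑ j ∈ Finset.range (s + 1),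
      ((-1 : ℂ) ^ (s - j) * esymm a (s - j)) • B.xm (j + 1 + m) Ψ = 0 := by
  intro m
  induction m with
  | zero => simpa using hrel
  | succ m ih =>
    have happ := congrArg (B.h 1) ih
    rw [map_sum, map_zero] at happ
    have hterm : ∀ j ∈ Finset.range (s + 1),
        B.h 1 (((-1:ℂ) ^ (s - j) * esymm a (s - j)) • B.xm (j + 1 + m) Ψ)
        = d 1 • (((-1:ℂ) ^ (s - j) * esymm a (s - j)) • B.xm (j + 1 + m) Ψ)
          - (2:ℂ) • (((-1:ℂ) ^ (s - j) * esymm a (s - j)) • B.xm (j + 1 + (m + 1)) Ψ) := by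
      intro j _
      rw [map_smul, h_xm_apply B 1 (j + 1 + m) (by omega), hhΨ, map_smul, smul_sub,
        smul_comm _ (d 1), smul_comm _ (2:ℂ), show 1 + (j + 1 + m) = j + 1 + (m + 1) by omega]
    rw [Finset.sum_congr rfl hterm, Finset.sum_sub_distrib, ← Finset.smul_sum,
      ← Finset.smul_sum, ih, smul_zero, zero_sub, neg_eq_zero] at happ
    rcases smul_eq_zero.mp happ with h | h
    · exact absurd h two_ne_zero
    · exact h

lemma esymm_zero : esymm a 0 = 1 := by
  simp [esymm]

lemma xm_mem_span (hhΨ : ∀ k, B.h k Ψ = d k • Ψ)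
    (hrel : ∑ j ∈ Finset.range (s + 1),
      ((-1 : ℂ) ^ (s - j) * esymm a (s - j)) • B.xm (j + 1) Ψ = 0) :
    ∀ k, 1 ≤ k → B.xm k Ψ ∈
      Submodule.span ℂ (Set.range fun j : Fin s => B.xm ((j : ℕ) + 1) Ψ) := by
  intro k
  induction k using Nat.strong_induction_on with
  | _ k ih =>
  intro hk
  by_cases hks : k ≤ s
  · have : B.xm k Ψ = (fun j : Fin s => B.xm ((j : ℕ) + 1) Ψ) ⟨k - 1, by omega⟩ := by
      simp only []
      congr 2
      omega
    rw [this]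
    exact Submodule.subset_span (Set.mem_range_self _)
  · set m := k - s - 1 with hm
    have hrel' := rel_shift B Ψ d a hhΨ hrel m
    rw [Finset.sum_range_succ, Nat.sub_self, pow_zero, esymm_zero, one_mul, one_smul] at hrel'
    have hks' : s + 1 + m = k := by omega
    rw [hks'] at hrel'
    have h2 := eq_neg_of_add_eq_zero_right hrel'
    rw [h2]
    refine neg_mem (Submodule.sum_mem _ fun j hj => Submodule.smul_mem _ _ ?_)
    have hj' : j < s := Finset.mem_range.mp hj
    exact ih (j + 1 + m) (by omega) (by omega)

end Stmt19Aux

/-- Let `Ψ` be a highest weight vector in a finite-dimensional representation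
of `U(B₀)` with nonzero, distinct highest weight parameters `a_1, …, a_s` of
multiplicities `m_1, …, m_s` (`r = Σ m_j`, `x_1^-` nilpotent of degree `r`),
and suppose `Σ_{j=0}^s (-1)^{s-j} μ_{s-j} x_{j+1}^- Ψ = 0` where
`μ_k = e_k(a_1, …, a_s)`.  Then the degree-1 sector of `U(B₀)Ψ` (the
`h₀`-eigenspace of eigenvalue `d₀ - 2`) has dimension at most `s`: it is
contained in the span of `x_1^- Ψ, …, x_s^- Ψ`. -/
theorem stmt19 {V : Type*} [AddCommGroup V] [Module ℂ V] [FiniteDimensional ℂ V]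
    (B : BorelRep V) (Ψ : V) (d : ℕ → ℂ)
    (hxpΨ : ∀ k, B.xp k Ψ = 0) (hhΨ : ∀ k, B.h k Ψ = d k • Ψ)
    (s : ℕ) (a : Fin s → ℂ) (ha : ∀ i, a i ≠ 0) (hdist : Function.Injective a)
    (mlt : Fin s → ℕ) (hmlt : ∀ i, 1 ≤ mlt i) (r : ℕ) (hr : r = ∑ i, mlt i)
    (hnil : ((B.xm 1) ^ (r + 1)) Ψ = 0) (hnz : ((B.xm 1) ^ r) Ψ ≠ 0)
    (hrel : ∑ j ∈ Finset.range (s + 1),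
      ((-1 : ℂ) ^ (s - j) * esymm a (s - j)) • B.xm (j + 1) Ψ = 0) :
    ∀ v ∈ cyclic B Ψ, B.h 0 v = (d 0 - 2) • v →
      v ∈ Submodule.span ℂ (Set.range fun j : Fin s => B.xm ((j : ℕ) + 1) Ψ) := by
  classical
  intro v hv hev
  have hT1 : Stmt19Aux.Tn B Ψ 1 ≤
      Submodule.span ℂ (Set.range fun j : Fin s => B.xm ((j : ℕ) + 1) Ψ) := by
    rw [Stmt19Aux.Tn, Submodule.span_le]
    rintro x ⟨l, hlen, hpos, rfl⟩
    rcases l with _ | ⟨k, l'⟩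
    · simp at hlen
    · rcases l' with _ | ⟨k', l''⟩
      · simp only [List.map_cons, List.map_nil, List.prod_cons, List.prod_nil, mul_one]
        exact Stmt19Aux.xm_mem_span B Ψ d a hhΨ hrel k (hpos k (by simp))
      · simp at hlen
  have hvs := Stmt19Aux.cyclic_le_iSup B Ψ d hxpΨ hhΨ hv
  rw [Submodule.mem_iSup_iff_exists_finsupp] at hvs
  obtain ⟨f, hf, hsum⟩ := hvs
  rw [Finsupp.sum] at hsum
  have hEf : ∀ n : ℕ, f n ∈ Module.End.eigenspace (B.h 0) (d 0 - 2 * (n : ℂ)) :=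
    fun n => Stmt19Aux.Tn_le_eigenspace B Ψ d hhΨ n (hf n)
  have hvE : v ∈ Module.End.eigenspace (B.h 0) (d 0 - 2 * ((1 : ℕ) : ℂ)) := by
    rw [Module.End.mem_eigenspace_iff, hev]
    norm_num
  have hkey : v - f 1 = ∑ n ∈ f.support.erase 1, f n := by
    by_cases h1 : 1 ∈ f.support
    · rw [Finset.sum_erase_eq_sub h1, hsum]
    · rw [Finset.erase_eq_of_notMem h1, hsum, Finsupp.notMem_support_iff.mp h1, sub_zero]
  have hsub1 : v - f 1 ∈ Module.End.eigenspace (B.h 0) (d 0 - 2 * ((1 : ℕ) : ℂ)) :=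
    sub_mem hvE (hEf 1)
  have hsub2 : v - f 1 ∈ ⨆ (μ : ℂ) (_ : μ ≠ d 0 - 2 * ((1 : ℕ) : ℂ)),
      Module.End.eigenspace (B.h 0) μ := by
    rw [hkey]
    refine Submodule.sum_mem _ fun n hn => ?_
    have hn1 : n ≠ 1 := (Finset.mem_erase.mp hn).1
    have hne : d 0 - 2 * (n : ℂ) ≠ d 0 - 2 * ((1 : ℕ) : ℂ) := by
      intro h
      apply hn1
      have h2 : (2 : ℂ) * (n : ℂ) = 2 * ((1 : ℕ) : ℂ) := sub_right_injective h
      have h3 : (n : ℂ) = ((1 : ℕ) : ℂ) := mul_left_cancel₀ two_ne_zero h2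
      exact_mod_cast h3
    exact Submodule.mem_iSup_of_mem _ (Submodule.mem_iSup_of_mem hne (hEf n))
  have hdisj := iSupIndep_def.mp (Module.End.eigenspaces_iSupIndep (B.h 0))
    (d 0 - 2 * ((1 : ℕ) : ℂ))
  have hz : v - f 1 = 0 := Submodule.disjoint_def.mp hdisj _ hsub1 hsub2
  rw [sub_eq_zero] at hz
  rw [hz]
  exact hT1 (hf 1)
end
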